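/- arXiv:2205.01856 — 5 statements merged into one kernel-verified Lean document; each statement's English description precedes it below -/
import Mathlib

section
/- (Asymptotic Müntz–Szász theorem, L² case) Let {N_n} be an increasing sequence of natural numbers, let 𝓜_n = span{xⁿ, x^{n+1}, …, x^{n+N_n}} ⊆ L²[0,1], let ρ_n = n/(n+N_n+1), and let 𝓜_∞ = { f ∈ L²[0,1] : dist(f, 𝓜_n) → 0 as n → ∞ }. If ρ_n → ρ as n → ∞, then 𝓜_∞ = L²[ρ², 1]. -/
open MeasureTheory Filter Topology

/-- The measure on `[0,1]` underlying the Hilbert space `L²[0,1]`. -/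
noncomputable def mu01 : Measure ℝ := volume.restrict (Set.Icc 0 1)

/-- The space `𝓜_n = span{xⁿ, …, x^{n+N_n}}` in `L²[0,1]`, where `mono k`
represents the monomial `xᵏ`. -/
noncomputable def Mn (N : ℕ → ℕ) (mono : ℕ → Lp ℂ 2 mu01) (n : ℕ) :
    Submodule ℂ (Lp ℂ 2 mu01) :=
  Submodule.span ℂ (mono '' Set.Icc n (n + N n))

/-- The space `𝓜_∞` of `f ∈ L²[0,1]` with `dist(f, 𝓜_n) → 0`. -/
noncomputable def Minf (N : ℕ → ℕ) (mono : ℕ → Lp ℂ 2 mu01) : Set (Lp ℂ 2 mu01) :=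
  {f | Tendsto (fun n => Metric.infDist f (Mn N mono n : Set (Lp ℂ 2 mu01)))
    atTop (𝓝 0)}

noncomputable section

local notation "⟪" x ", " y "⟫" => @inner ℂ _ _ x y

variable {E : Type*} [NormedAddCommGroup E] [InnerProductSpace ℂ E]

/-- Gram–Schmidt step for orthogonal projections. -/
lemma proj_insert_formula (V W : Submodule ℂ E) [Submodule.HasOrthogonalProjection V]
    [Submodule.HasOrthogonalProjection W]
    (z : E) (hW : W = V ⊔ Submodule.span ℂ {z})
    (u : E) (hu : u = z - Submodule.orthogonalProjectionOnto V z) (hu0 : u ≠ 0) (f : E) :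
    (Submodule.orthogonalProjectionOnto W f : E)
      = Submodule.orthogonalProjectionOnto V f + (⟪u, f⟫ / ((‖u‖ : ℂ) ^ 2)) • u := by
  have huV : u ∈ Vᗮ := by
    rw [hu]; exact Submodule.sub_starProjection_mem_orthogonal z
  have hn : ((‖u‖ : ℂ) ^ 2) ≠ 0 :=
    pow_ne_zero 2 (by exact_mod_cast norm_ne_zero_iff.mpr hu0)
  refine Submodule.eq_starProjection_of_mem_of_inner_eq_zero ?_ ?_
  · have h1 : (Submodule.orthogonalProjectionOnto V f : E) ∈ W := by
      rw [hW]; exact Submodule.mem_sup_left (SetLike.coe_mem _)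
    have h2 : u ∈ W := by
      rw [hu, hW]
      exact sub_mem (Submodule.mem_sup_right (Submodule.mem_span_singleton_self z))
        (Submodule.mem_sup_left (SetLike.coe_mem _))
    exact add_mem h1 (Submodule.smul_mem _ _ h2)
  · intro w hw
    rw [hW, Submodule.mem_sup] at hw
    obtain ⟨v, hv, s, hs, rfl⟩ := hw
    obtain ⟨a, rfl⟩ := Submodule.mem_span_singleton.mp hs
    set c : ℂ := ⟪u, f⟫ / ((‖u‖ : ℂ)^2) with hc
    have horth : ∀ y ∈ V, ⟪f - ((Submodule.orthogonalProjectionOnto V f : E) + c • u), y⟫ = 0 := by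
      intro y hy
      have h1 : ⟪f - (Submodule.orthogonalProjectionOnto V f : E), y⟫ = 0 :=
        (Submodule.mem_orthogonal' V _).mp (Submodule.sub_starProjection_mem_orthogonal f) y hy
      have h2 : ⟪u, y⟫ = 0 := (Submodule.mem_orthogonal' V u).mp huV y hy
      have e : f - ((Submodule.orthogonalProjectionOnto V f : E) + c • u)
          = (f - (Submodule.orthogonalProjectionOnto V f : E)) - c • u := by abel
      rw [e, inner_sub_left, h1, inner_smul_left, h2]; ring
    have hzdecomp : z = (Submodule.orthogonalProjectionOnto V z : E) + u := by rw [hu]; abel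
    have hru : ⟪f - ((Submodule.orthogonalProjectionOnto V f : E) + c • u), u⟫ = 0 := by
      have h1 : ⟪f - (Submodule.orthogonalProjectionOnto V f : E), u⟫ = (starRingEnd ℂ) ⟪u, f⟫ := by
        rw [← inner_conj_symm]
        congr 1
        rw [inner_sub_right]
        have h0 : ⟪u, ((Submodule.orthogonalProjectionOnto V f : E))⟫ = 0 :=
          (Submodule.mem_orthogonal' V u).mp huV _ (SetLike.coe_mem _)
        rw [h0, sub_zero]
      have e : f - ((Submodule.orthogonalProjectionOnto V f : E) + c • u)
          = (f - (Submodule.orthogonalProjectionOnto V f : E)) - c • u := by abel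
      rw [e, inner_sub_left, h1, inner_smul_left, inner_self_eq_norm_sq_to_K, hc, map_div₀]
      have h2 : (starRingEnd ℂ) (((‖u‖ : ℂ))^2) = ((‖u‖ : ℂ))^2 := by
        rw [map_pow, Complex.conj_ofReal]
      rw [h2]
      field_simp
      simp [hu0]
    rw [inner_add_right, horth v hv, inner_smul_right, hzdecomp, inner_add_right,
      horth _ (SetLike.coe_mem _), hru]
    ring
def Vspan (x : ℕ → E) (S : Finset ℕ) : Submodule ℂ E := Submodule.span ℂ (x '' ↑S)

lemma hasProj (x : ℕ → E) (S : Finset ℕ) : Submodule.HasOrthogonalProjection (Vspan x S) := by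
  haveI : FiniteDimensional ℂ (Vspan x S) :=
    FiniteDimensional.span_of_finite ℂ (S.finite_toSet.image x)
  infer_instance

def resid (x : ℕ → E) (S : Finset ℕ) (m : ℕ) : E :=
  letI := hasProj x S
  x m - Submodule.orthogonalProjectionOnto (Vspan x S) (x m)
/-- factor in the product formula -/
def gfac (a b k : ℕ) : ℝ :=
  (((a:ℝ) - k) * ((b:ℝ) - k)) / (((a:ℝ) + k + 1) * ((b:ℝ) + k + 1))

def Phi (m l : ℕ) (S : Finset ℕ) : ℝ :=
  ((m:ℝ) + l + 1)⁻¹ * ∏ k ∈ S, gfac m l k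

lemma cast_add_one_ne (a k : ℕ) : ((a:ℝ) + k + 1) ≠ 0 := by positivity

lemma cast_sub_ne {a k : ℕ} (h : a ≠ k) : ((a:ℝ) - k) ≠ 0 :=
  sub_ne_zero.mpr (by exact_mod_cast h)

lemma gfac_ne {a b k : ℕ} (ha : a ≠ k) (hb : b ≠ k) : gfac a b k ≠ 0 := by
  unfold gfac
  exact div_ne_zero (mul_ne_zero (cast_sub_ne ha) (cast_sub_ne hb))
    (mul_ne_zero (cast_add_one_ne a k) (cast_add_one_ne b k))

lemma Phi_pos {t : ℕ} {S : Finset ℕ} (ht : t ∉ S) : 0 < Phi t t S := by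
  unfold Phi
  apply mul_pos (by positivity)
  apply Finset.prod_pos
  intro k hk
  have htk : t ≠ k := fun h => ht (h ▸ hk)
  unfold gfac
  apply div_pos
  · have := cast_sub_ne htk
    exact lt_of_le_of_ne (mul_self_nonneg _) (Ne.symm (mul_ne_zero this this))
  · positivity

lemma Phi_ne {t : ℕ} {S : Finset ℕ} (ht : t ∉ S) : Phi t t S ≠ 0 := (Phi_pos ht).ne'

/-- The key algebraic recursion for `Phi`. -/
lemma Phi_rec {m l t : ℕ} {S : Finset ℕ} (ht : t ∉ S) :
    Phi m l (insert t S) = Phi m l S - Phi t m S * Phi t l S / Phi t t S := by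
  have hprod : (∏ k ∈ S, gfac t m k) * (∏ k ∈ S, gfac t l k)
      = (∏ k ∈ S, gfac m l k) * (∏ k ∈ S, gfac t t k) := by
    rw [← Finset.prod_mul_distrib, ← Finset.prod_mul_distrib]
    apply Finset.prod_congr rfl
    intro k hk
    have htk : t ≠ k := fun h => ht (h ▸ hk)
    unfold gfac
    field_simp
  have hC : (∏ k ∈ S, gfac t t k) ≠ 0 := by
    apply Finset.prod_ne_zero_iff.mpr
    intro k hk
    have htk : t ≠ k := fun h => ht (h ▸ hk)
    exact gfac_ne htk htk
  have e2 : Phi t m S * Phi t l S / Phi t t S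
      = (((t:ℝ)+m+1)⁻¹ * ((t:ℝ)+l+1)⁻¹ * ((t:ℝ)+t+1)) * ∏ k ∈ S, gfac m l k := by
    unfold Phi
    rw [div_eq_iff (mul_ne_zero (by positivity) hC)]
    have hcc : ((t:ℝ)+t+1) * ((t:ℝ)+t+1)⁻¹ = 1 := mul_inv_cancel₀ (by positivity)
    linear_combination (-(((t:ℝ)+m+1)⁻¹ * ((t:ℝ)+l+1)⁻¹ * (∏ k ∈ S, gfac m l k)
      * (∏ k ∈ S, gfac t t k))) * hcc + (((t:ℝ)+m+1)⁻¹ * ((t:ℝ)+l+1)⁻¹) * hprod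
  rw [e2]
  unfold Phi
  rw [Finset.prod_insert ht]
  have scalar : ((m:ℝ) + l + 1)⁻¹ * gfac m l t
      = ((m:ℝ) + l + 1)⁻¹ - ((t:ℝ)+m+1)⁻¹ * ((t:ℝ)+l+1)⁻¹ * ((t:ℝ)+t+1) := by
    unfold gfac
    have e1 : ((m:ℝ) + t + 1) = ((t:ℝ) + m + 1) := by ring
    have e2 : ((l:ℝ) + t + 1) = ((t:ℝ) + l + 1) := by ring
    rw [e1, e2]
    field_simp
    ring
  linear_combination (∏ k ∈ S, gfac m l k) * scalar
section Main
variable {E : Type*} [NormedAddCommGroup E] [InnerProductSpace ℂ E]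

lemma resid_eq (x : ℕ → E) (S : Finset ℕ) (m : ℕ) :
    letI := hasProj x S
    resid x S m = x m - Submodule.orthogonalProjectionOnto (Vspan x S) (x m) := rfl

lemma resid_mem_orthogonal (x : ℕ → E) (S : Finset ℕ) (m : ℕ) :
    resid x S m ∈ (Vspan x S)ᗮ := by
  letI := hasProj x S
  rw [resid_eq]
  exact Submodule.sub_starProjection_mem_orthogonal (x m)

lemma x_sub_resid_mem (x : ℕ → E) (S : Finset ℕ) (m : ℕ) :
    x m - resid x S m ∈ Vspan x S := by
  letI := hasProj x S
  rw [resid_eq]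
  simpa using SetLike.coe_mem (Submodule.orthogonalProjectionOnto (Vspan x S) (x m))

/-- Main formula: `⟪resid x S m, x l⟫ = Phi m l S`. -/
lemma resid_inner (x : ℕ → E)
    (hx : ∀ a b : ℕ, ⟪x a, x b⟫ = ((((a:ℝ) + b + 1)⁻¹ : ℝ) : ℂ)) :
    ∀ (S : Finset ℕ) (m l : ℕ), m ∉ S → l ∉ S →
      ⟪resid x S m, x l⟫ = ((Phi m l S : ℝ) : ℂ) := by
  intro S
  induction S using Finset.induction_on with
  | empty =>
    intro m l _ _
    letI := hasProj x (∅ : Finset ℕ)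
    have hbot : Vspan x (∅ : Finset ℕ) = ⊥ := by
      simp [Vspan]
    have hP : (Submodule.orthogonalProjectionOnto (Vspan x (∅ : Finset ℕ)) (x m) : E) = 0 := by
      refine Submodule.eq_starProjection_of_mem_of_inner_eq_zero (zero_mem _) ?_
      intro w hw
      rw [hbot, Submodule.mem_bot] at hw
      simp [hw]
    rw [resid_eq, hP, sub_zero, hx]
    norm_num [Phi]
  | @insert t S htS ih =>
    intro m l hm hl
    rw [Finset.mem_insert, not_or] at hm hl
    letI := hasProj x S
    letI := hasProj x (insert t S)
    set u := resid x S t with hu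
    have hWV : Vspan x (insert t S) = Vspan x S ⊔ Submodule.span ℂ {x t} := by
      rw [Vspan, Finset.coe_insert, Set.image_insert_eq, Submodule.span_insert,
        sup_comm]
      rfl
    have huorth : u ∈ (Vspan x S)ᗮ := resid_mem_orthogonal x S t
    have hut : ⟪u, x t⟫ = ((Phi t t S : ℝ) : ℂ) := ih t t htS htS
    have huu : ⟪u, u⟫ = ((Phi t t S : ℝ) : ℂ) := by
      have h2 : ⟪u, (Submodule.orthogonalProjectionOnto (Vspan x S) (x t) : E)⟫ = 0 :=
        (Submodule.mem_orthogonal' _ u).mp huorth _ (SetLike.coe_mem _)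
      calc ⟪u, u⟫ = ⟪u, x t - Submodule.orthogonalProjectionOnto (Vspan x S) (x t)⟫ := by rw [← resid_eq]
        _ = ⟪u, x t⟫ - ⟪u, (Submodule.orthogonalProjectionOnto (Vspan x S) (x t) : E)⟫ := inner_sub_right _ _ _
        _ = ((Phi t t S : ℝ) : ℂ) := by rw [hut, h2, sub_zero]
    have hu0 : u ≠ 0 := by
      intro h
      rw [h, inner_zero_left] at huu
      exact Phi_ne htS (by exact_mod_cast huu.symm)
    have hnormR : ‖u‖ ^ 2 = Phi t t S := by
      have h := norm_sq_eq_re_inner (𝕜 := ℂ) u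
      rw [huu] at h
      simpa using h
    have hnorm : ((‖u‖ : ℂ)) ^ 2 = ((Phi t t S : ℝ) : ℂ) := by
      rw [← Complex.ofReal_pow, hnormR]
    have hresid : resid x (insert t S) m
        = resid x S m - (⟪u, x m⟫ / ((‖u‖ : ℂ) ^ 2)) • u := by
      have hproj := proj_insert_formula (Vspan x S) (Vspan x (insert t S)) (x t) hWV u
        (by rw [hu, resid_eq]) hu0 (x m)
      rw [resid_eq, resid_eq, hproj]
      abel
    rw [hresid, inner_sub_left, ih m l hm.2 hl.2, inner_smul_left, hnorm,
      ih t m htS hm.2, ih t l htS hl.2, map_div₀, Complex.conj_ofReal, Complex.conj_ofReal,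
      Phi_rec htS]
    push_cast
    ring
end Main
/-- telescoping identity -/
lemma prod_telescope (m n M : ℕ) (hn : m + 1 ≤ n) (hM : n + 2*m + 1 ≤ M) :
    (∏ k ∈ Finset.Icc n M, (((k:ℝ) - m) / ((k:ℝ) + m + 1)))
      = ∏ j ∈ Finset.range (2*m+1), (((n:ℝ) + j - m) / ((M:ℝ) + 1 + j - m)) := by
  have hsplit : ∏ k ∈ Finset.Icc n M, (((k:ℝ) - m) / ((k:ℝ) + m + 1))
      = (∏ k ∈ Finset.Icc n M, ((k:ℝ) - m)) / ∏ k ∈ Finset.Icc n M, ((k:ℝ) + m + 1) := by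
    rw [Finset.prod_div_distrib]
  -- rewrite denominator as a shifted product
  have hden : ∏ k ∈ Finset.Icc n M, ((k:ℝ) + m + 1)
      = ∏ k ∈ Finset.Icc (n + (2*m+1)) (M + (2*m+1)), ((k:ℝ) - m) := by
    rw [← Finset.map_add_right_Icc]
    rw [Finset.prod_map]
    apply Finset.prod_congr rfl
    intro k hk
    simp only [addRightEmbedding_apply]
    push_cast
    ring
  -- split both numerator and denominator ranges
  have h1 : n ≤ n + (2*m+1) := Nat.le_add_right _ _
  have h2 : n + (2*m+1) ≤ M + 1 := by omega
  have h3 : M + 1 ≤ M + (2*m+1) + 1 := by omega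
  have hnum_split : (∏ k ∈ Finset.Ico n (n + (2*m+1)), ((k:ℝ) - m))
        * (∏ k ∈ Finset.Ico (n + (2*m+1)) (M+1), ((k:ℝ) - m))
      = ∏ k ∈ Finset.Icc n M, ((k:ℝ) - m) := by
    rw [← Finset.Ico_add_one_right_eq_Icc]
    exact Finset.prod_Ico_consecutive _ h1 h2
  have hden_split : (∏ k ∈ Finset.Ico (n + (2*m+1)) (M+1), ((k:ℝ) - m))
        * (∏ k ∈ Finset.Ico (M+1) (M + (2*m+1) + 1), ((k:ℝ) - m))
      = ∏ k ∈ Finset.Icc (n + (2*m+1)) (M + (2*m+1)), ((k:ℝ) - m) := by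
    rw [← Finset.Ico_add_one_right_eq_Icc]
    exact Finset.prod_Ico_consecutive _ h2 h3
  have hmid_ne : (∏ k ∈ Finset.Ico (n + (2*m+1)) (M+1), ((k:ℝ) - m)) ≠ 0 := by
    apply Finset.prod_ne_zero_iff.mpr
    intro k hk
    rw [Finset.mem_Ico] at hk
    have : (m:ℝ) < k := by exact_mod_cast (by omega : m < k)
    linarith [this]
  rw [hsplit, hden, ← hnum_split, ← hden_split]
  rw [mul_comm (∏ k ∈ Finset.Ico n (n + (2*m+1)), ((k:ℝ) - m)) _]
  rw [mul_div_mul_left _ _ hmid_ne]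
  -- now reindex both products by range
  rw [Finset.prod_Ico_eq_prod_range, Finset.prod_Ico_eq_prod_range]
  have e1 : n + (2*m+1) - n = 2*m+1 := by omega
  have e2 : M + (2*m+1) + 1 - (M+1) = 2*m+1 := by omega
  rw [e1, e2, ← Finset.prod_div_distrib]
  apply Finset.prod_congr rfl
  intro j hj
  push_cast
  ring_nf

/-- Each shifted factor tends to ρ. -/
lemma factor_tendsto (N : ℕ → ℕ) (ρ : ℝ)
    (hρ : Tendsto (fun n : ℕ => (n : ℝ) / ((n : ℝ) + (N n : ℝ) + 1)) atTop (𝓝 ρ))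
    (c : ℝ) :
    Tendsto (fun n : ℕ => ((n : ℝ) + c) / (((n : ℝ) + (N n : ℝ) + 1) + c)) atTop (𝓝 ρ) := by
  have hD : Tendsto (fun n : ℕ => (n : ℝ) + (N n : ℝ) + 1) atTop atTop := by
    apply tendsto_atTop_mono (fun n => ?_) tendsto_natCast_atTop_atTop
    have : (0:ℝ) ≤ (N n : ℝ) := Nat.cast_nonneg _
    linarith
  have hD0 : ∀ n : ℕ, ((n : ℝ) + (N n : ℝ) + 1) ≠ 0 := by
    intro n; positivity
  have hc : Tendsto (fun n : ℕ => c / ((n : ℝ) + (N n : ℝ) + 1)) atTop (𝓝 0) :=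
    Tendsto.div_atTop tendsto_const_nhds hD
  have heq : ∀ n : ℕ, ((n : ℝ) + c) / (((n : ℝ) + (N n : ℝ) + 1) + c)
      = ((n : ℝ) / ((n : ℝ) + (N n : ℝ) + 1) + c / ((n : ℝ) + (N n : ℝ) + 1))
        / (1 + c / ((n : ℝ) + (N n : ℝ) + 1)) := by
    intro n
    set D := (n : ℝ) + (N n : ℝ) + 1 with hD'
    have hDn : D ≠ 0 := hD0 n
    by_cases h : D + c = 0
    · rw [h, div_zero]
      have : 1 + c / D = (D + c) / D := by field_simp
      rw [this, h, zero_div, div_zero]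
    · field_simp
  simp only [heq]
  have h1 : Tendsto (fun n : ℕ => (n : ℝ) / ((n : ℝ) + (N n : ℝ) + 1)
      + c / ((n : ℝ) + (N n : ℝ) + 1)) atTop (𝓝 (ρ + 0)) := hρ.add hc
  have h2 : Tendsto (fun n : ℕ => 1 + c / ((n : ℝ) + (N n : ℝ) + 1)) atTop (𝓝 (1 + 0)) :=
    tendsto_const_nhds.add hc
  rw [add_zero] at h1 h2
  simpa [Pi.div_def] using h1.div h2 one_ne_zero

/-- The Blaschke-type product tends to `ρ ^ (2m+1)`. -/
lemma Aprod_tendsto (N : ℕ → ℕ) (hN : ∀ n, n ≤ N n) (ρ : ℝ)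
    (hρ : Tendsto (fun n : ℕ => (n : ℝ) / ((n : ℝ) + (N n : ℝ) + 1)) atTop (𝓝 ρ))
    (m : ℕ) :
    Tendsto (fun n : ℕ => ∏ k ∈ Finset.Icc n (n + N n), (((k:ℝ) - m) / ((k:ℝ) + m + 1)))
      atTop (𝓝 (ρ ^ (2*m+1))) := by
  have hlim : Tendsto (fun n : ℕ =>
      ∏ j ∈ Finset.range (2*m+1), (((n:ℝ) + j - m) / (((n:ℝ) + (N n : ℝ) + 1) + ((j:ℝ) - m))))
      atTop (𝓝 (∏ _j ∈ Finset.range (2*m+1), ρ)) := by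
    apply tendsto_finset_prod
    intro j _
    have := factor_tendsto N ρ hρ ((j:ℝ) - m)
    apply this.congr
    intro n
    congr 1
    ring
  rw [Finset.prod_const, Finset.card_range] at hlim
  apply Tendsto.congr' _ hlim
  filter_upwards [eventually_ge_atTop (2*m+2)] with n hn
  have key := prod_telescope m n (n + N n) (by omega) (by have := hN n; omega)
  rw [key]
  apply Finset.prod_congr rfl
  intro j _
  congr 1
  · push_cast; ring

lemma int_pow_Icc (a b : ℝ) (h : a ≤ b) (c : ℕ) :
    ∫ x in Set.Icc a b, x ^ c ∂volume = (b ^ (c+1) - a ^ (c+1)) / (c+1) := by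
  rw [integral_Icc_eq_integral_Ioc, ← intervalIntegral.integral_of_le h, integral_pow]

instance : IsFiniteMeasure mu01 := by
  constructor
  rw [mu01, Measure.restrict_apply_univ, Real.volume_Icc]
  exact ENNReal.ofReal_lt_top

lemma mu01_univ : mu01 Set.univ = 1 := by
  rw [mu01, Measure.restrict_apply_univ, Real.volume_Icc]
  norm_num

lemma integrable_ind_pow (r : ℝ) (c : ℕ) :
    Integrable ((Set.Icc (0:ℝ) r).indicator (fun x : ℝ => ((x : ℂ) ^ c))) mu01 := by
  apply Integrable.indicator _ measurableSet_Icc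
  rw [mu01]
  exact (Continuous.integrableOn_Icc (by continuity))

lemma int_ind_pow (r : ℝ) (hr0 : 0 ≤ r) (hr1 : r ≤ 1) (c : ℕ) :
    ∫ x, (Set.Icc (0:ℝ) r).indicator (fun x : ℝ => ((x : ℂ) ^ c)) x ∂mu01
      = ((r ^ (c+1) / (c+1) : ℝ) : ℂ) := by
  rw [integral_indicator measurableSet_Icc, mu01, Measure.restrict_restrict measurableSet_Icc]
  have hsub : Set.Icc (0:ℝ) r ∩ Set.Icc 0 1 = Set.Icc 0 r := by
    apply Set.inter_eq_left.mpr
    exact Set.Icc_subset_Icc le_rfl hr1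
  rw [hsub]
  have : ∀ x : ℝ, ((x : ℂ) ^ c) = (((x ^ c : ℝ)) : ℂ) := by intro x; push_cast; ring
  simp_rw [this]
  calc ∫ x in Set.Icc 0 r, (((x ^ c : ℝ)) : ℂ) ∂volume
      = ((∫ x in Set.Icc 0 r, x ^ c ∂volume : ℝ) : ℂ) := integral_ofReal
    _ = ((r ^ (c+1) / (c+1) : ℝ) : ℂ) := by
        rw [int_pow_Icc 0 r hr0 c]
        norm_num

lemma mono_inner (mono : ℕ → Lp ℂ 2 mu01)
    (hmono : ∀ k : ℕ, (mono k : ℝ → ℂ) =ᵐ[mu01] fun x => (x : ℂ) ^ k) (a b : ℕ) :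
    ⟪mono a, mono b⟫ = ((((a:ℝ) + b + 1)⁻¹ : ℝ) : ℂ) := by
  rw [MeasureTheory.L2.inner_def]
  have h : (fun x => ⟪(mono a : ℝ → ℂ) x, (mono b : ℝ → ℂ) x⟫) =ᵐ[mu01]
      fun x : ℝ => (((x ^ (a+b) : ℝ)) : ℂ) := by
    filter_upwards [hmono a, hmono b] with x hxa hxb
    simp only [RCLike.inner_apply, hxa, hxb]
    rw [← Complex.ofReal_pow]
    push_cast
    rw [map_pow, Complex.conj_ofReal, ← pow_add, add_comm b a]
  rw [integral_congr_ae h]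
  calc ∫ x, (((x ^ (a+b) : ℝ)) : ℂ) ∂mu01
      = ((∫ x, x ^ (a+b) ∂mu01 : ℝ) : ℂ) := integral_ofReal
    _ = ((((a:ℝ) + b + 1)⁻¹ : ℝ) : ℂ) := by
        rw [mu01, int_pow_Icc 0 1 zero_le_one]
        push_cast
        norm_num

def pfun (T : Finset ℕ) (c : ℕ → ℂ) : ℝ → ℂ := fun x => ∑ m ∈ T, c m * (x:ℂ) ^ m

lemma coeFn_combo (mono : ℕ → Lp ℂ 2 mu01)
    (hmono : ∀ k : ℕ, (mono k : ℝ → ℂ) =ᵐ[mu01] fun x => (x : ℂ) ^ k)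
    (T : Finset ℕ) (c : ℕ → ℂ) :
    (((∑ m ∈ T, c m • mono m : Lp ℂ 2 mu01)) : ℝ → ℂ) =ᵐ[mu01] pfun T c := by
  induction T using Finset.induction_on with
  | empty =>
    simp only [Finset.sum_empty]
    filter_upwards [Lp.coeFn_zero (E := ℂ) (p := 2) (μ := mu01)] with x hx
    simp only [pfun, Finset.sum_empty]
    rw [hx]
    rfl
  | @insert t T htT ih =>
    rw [Finset.sum_insert htT]
    filter_upwards [Lp.coeFn_add (c t • mono t) (∑ m ∈ T, c m • mono m),
      Lp.coeFn_smul (c t) (mono t), hmono t, ih] with x h1 h2 h3 h4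
    rw [h1]
    simp only [Pi.add_apply, h2, Pi.smul_apply, h3, h4, pfun, Finset.sum_insert htT,
      smul_eq_mul]

def QLp (r : ℝ) (f : Lp ℂ 2 mu01) : Lp ℂ 2 mu01 :=
  MemLp.toLp _ ((Lp.memLp f).indicator (measurableSet_Icc (a := (0:ℝ)) (b := r)))

lemma QLp_coe (r : ℝ) (f : Lp ℂ 2 mu01) :
    (QLp r f : ℝ → ℂ) =ᵐ[mu01] (Set.Icc (0:ℝ) r).indicator f :=
  MemLp.coeFn_toLp _

lemma QLp_norm_def (r : ℝ) (f : Lp ℂ 2 mu01) :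
    ‖QLp r f‖ = (eLpNorm ((Set.Icc (0:ℝ) r).indicator f) 2 mu01).toReal :=
  Lp.norm_toLp _ _

lemma QLp_lipschitz (r : ℝ) (f g : Lp ℂ 2 mu01) : ‖QLp r f - QLp r g‖ ≤ ‖f - g‖ := by
  have hsub : QLp r f - QLp r g = MemLp.toLp _
      ((((Lp.memLp f).indicator (measurableSet_Icc (a := (0:ℝ)) (b := r)))).sub
        ((Lp.memLp g).indicator (measurableSet_Icc (a := (0:ℝ)) (b := r)))) := by
    rw [MemLp.toLp_sub]
    rfl
  rw [hsub, Lp.norm_toLp]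
  have hind : ((Set.Icc (0:ℝ) r).indicator ⇑f - (Set.Icc (0:ℝ) r).indicator ⇑g)
      = (Set.Icc (0:ℝ) r).indicator (⇑f - ⇑g) := by
    funext x
    by_cases hx : x ∈ Set.Icc (0:ℝ) r <;>
      simp [Set.indicator_of_mem, Set.indicator_of_notMem, hx]
  rw [hind, Lp.norm_def]
  apply ENNReal.toReal_mono (Lp.eLpNorm_ne_top _)
  calc eLpNorm ((Set.Icc (0:ℝ) r).indicator (⇑f - ⇑g)) 2 mu01
      ≤ eLpNorm (⇑f - ⇑g) 2 mu01 := eLpNorm_indicator_le _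
    _ = eLpNorm (⇑(f - g)) 2 mu01 := eLpNorm_congr_ae (Lp.coeFn_sub f g).symm

lemma QLp_norm_zero_iff (r : ℝ) (f : Lp ℂ 2 mu01) :
    ‖QLp r f‖ = 0 ↔ (∀ᵐ x ∂mu01, x ∈ Set.Icc (0:ℝ) r → (f : ℝ → ℂ) x = 0) := by
  rw [QLp_norm_def, ENNReal.toReal_eq_zero_iff]
  have hne : eLpNorm ((Set.Icc (0:ℝ) r).indicator f) 2 mu01 ≠ ⊤ :=
    lt_of_le_of_lt (eLpNorm_indicator_le _) (Lp.eLpNorm_lt_top f) |>.ne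
  have hmeas : AEStronglyMeasurable ((Set.Icc (0:ℝ) r).indicator ⇑f) mu01 :=
    (Lp.aestronglyMeasurable f).indicator measurableSet_Icc
  rw [or_iff_left hne, eLpNorm_eq_zero_iff hmeas (by norm_num)]
  constructor
  · intro h
    filter_upwards [h] with x hx hmem
    rwa [Set.indicator_of_mem hmem] at hx
  · intro h
    filter_upwards [h] with x hx
    by_cases hmem : x ∈ Set.Icc (0:ℝ) r
    · rw [Set.indicator_of_mem hmem]
      exact hx hmem
    · rw [Set.indicator_of_notMem hmem]
      rfl

lemma QLp_norm_sq (r : ℝ) (hr0 : 0 ≤ r) (hr1 : r ≤ 1) (mono : ℕ → Lp ℂ 2 mu01)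
    (hmono : ∀ k : ℕ, (mono k : ℝ → ℂ) =ᵐ[mu01] fun x => (x : ℂ) ^ k)
    (T : Finset ℕ) (c : ℕ → ℂ) :
    ‖QLp r (∑ m ∈ T, c m • mono m)‖ ^ 2
      = (∑ m ∈ T, ∑ l ∈ T, (starRingEnd ℂ) (c m) * c l
          * ((r ^ (m+l+1) / ((m:ℝ) + l + 1) : ℝ) : ℂ)).re := by
  set F := (∑ m ∈ T, c m • mono m : Lp ℂ 2 mu01) with hF
  have hQc : (QLp r F : ℝ → ℂ) =ᵐ[mu01] (Set.Icc (0:ℝ) r).indicator (pfun T c) := by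
    filter_upwards [QLp_coe r F, coeFn_combo mono hmono T c] with x h1 h2
    rw [h1]
    by_cases hmem : x ∈ Set.Icc (0:ℝ) r
    · rw [Set.indicator_of_mem hmem, Set.indicator_of_mem hmem, h2]
    · rw [Set.indicator_of_notMem hmem, Set.indicator_of_notMem hmem]
  have hinner : (inner ℂ (QLp r F) (QLp r F) : ℂ) = ∑ m ∈ T, ∑ l ∈ T,
      (starRingEnd ℂ) (c m) * c l * ((r ^ (m+l+1) / ((m:ℝ) + l + 1) : ℝ) : ℂ) := by
    rw [L2.inner_def]
    have hpt : (fun x => (inner ℂ ((QLp r F : ℝ → ℂ) x) ((QLp r F : ℝ → ℂ) x) : ℂ)) =ᵐ[mu01]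
        fun x => ∑ m ∈ T, ∑ l ∈ T, ((starRingEnd ℂ) (c m) * c l)
          • ((Set.Icc (0:ℝ) r).indicator (fun y : ℝ => ((y:ℂ)) ^ (m+l)) x) := by
      filter_upwards [hQc] with x hx
      simp only [RCLike.inner_apply, hx]
      by_cases hmem : x ∈ Set.Icc (0:ℝ) r
      · simp only [Set.indicator_of_mem hmem, pfun]
        rw [map_sum, Finset.sum_mul_sum, Finset.sum_comm]
        apply Finset.sum_congr rfl
        intro m _
        apply Finset.sum_congr rfl
        intro l _
        rw [map_mul, map_pow, Complex.conj_ofReal, smul_eq_mul, pow_add]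
        ring
      · simp [Set.indicator_of_notMem hmem]
    rw [integral_congr_ae hpt]
    rw [integral_finset_sum T (f := fun m a => ∑ l ∈ T, ((starRingEnd ℂ) (c m) * c l)
        • ((Set.Icc (0:ℝ) r).indicator (fun y : ℝ => ((y:ℂ)) ^ (m+l)) a))
      (fun m _ => integrable_finset_sum T
      (fun l _ => ((integrable_ind_pow r (m+l)).smul ((starRingEnd ℂ) (c m) * c l))))]
    apply Finset.sum_congr rfl
    intro m _
    rw [integral_finset_sum T (f := fun l a => ((starRingEnd ℂ) (c m) * c l)
        • ((Set.Icc (0:ℝ) r).indicator (fun y : ℝ => ((y:ℂ)) ^ (m+l)) a))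
      (fun l _ => ((integrable_ind_pow r (m+l)).smul ((starRingEnd ℂ) (c m) * c l)))]
    apply Finset.sum_congr rfl
    intro l _
    rw [integral_smul, int_ind_pow r hr0 hr1 (m+l), smul_eq_mul]
    congr 2
    push_cast
    ring
  rw [norm_sq_eq_re_inner (𝕜 := ℂ), hinner]
  rfl
/-- Stone-Weierstrass on `[0,1]`, real case, explicit polynomial. -/
lemma sw_poly (g : C(Set.Icc (0:ℝ) 1, ℝ)) (ε : ℝ) (hε : 0 < ε) :
    ∃ p : Polynomial ℝ, ∀ x : Set.Icc (0:ℝ) 1, |g x - p.eval (x:ℝ)| < ε := by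
  have hmem : g ∈ (polynomialFunctions (Set.Icc (0:ℝ) 1)).topologicalClosure := by
    rw [polynomialFunctions_closure_eq_top 0 1]
    trivial
  have hclo : g ∈ closure (polynomialFunctions (Set.Icc (0:ℝ) 1) :
      Set C(Set.Icc (0:ℝ) 1, ℝ)) := hmem
  rw [Metric.mem_closure_iff] at hclo
  obtain ⟨q, hq, hdist⟩ := hclo ε hε
  rw [polynomialFunctions_coe] at hq
  obtain ⟨p, rfl⟩ := hq
  refine ⟨p, fun x => ?_⟩
  have h1 := ContinuousMap.dist_apply_le_dist (f := g)
    (g := Polynomial.toContinuousMapOnAlgHom _ p) x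
  have h2 : dist (g x) ((Polynomial.toContinuousMapOnAlgHom _ p) x) < ε :=
    lt_of_le_of_lt h1 hdist
  rw [Real.dist_eq] at h2
  simpa [Polynomial.toContinuousMapOnAlgHom, Polynomial.toContinuousMapOn,
    Polynomial.toContinuousMap] using h2

/-- complex polynomial approx of bounded continuous function on [0,1] -/
lemma sw_poly_complex (f₀ : BoundedContinuousFunction ℝ ℂ) (ε : ℝ) (hε : 0 < ε) :
    ∃ (T : Finset ℕ) (c : ℕ → ℂ), ∀ x : ℝ, x ∈ Set.Icc (0:ℝ) 1 →
      ‖f₀ x - ∑ m ∈ T, c m * (x:ℂ) ^ m‖ ≤ ε := by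
  set K := Set.Icc (0:ℝ) 1
  have hcont : Continuous fun y : K => f₀ (y : ℝ) :=
    f₀.continuous.comp continuous_subtype_val
  set gre : C(K, ℝ) := ⟨fun y => (f₀ (y:ℝ)).re, (Complex.continuous_re.comp hcont)⟩ with hgre
  set gim : C(K, ℝ) := ⟨fun y => (f₀ (y:ℝ)).im, (Complex.continuous_im.comp hcont)⟩ with hgim
  obtain ⟨p1, hp1⟩ := sw_poly gre (ε/2) (by linarith)
  obtain ⟨p2, hp2⟩ := sw_poly gim (ε/2) (by linarith)
  set n := max p1.natDegree p2.natDegree + 1 with hn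
  refine ⟨Finset.range n, fun m => ((p1.coeff m : ℂ) + Complex.I * (p2.coeff m : ℂ)), ?_⟩
  intro x hx
  have hsum : ∑ m ∈ Finset.range n, ((p1.coeff m : ℂ) + Complex.I * (p2.coeff m : ℂ)) * (x:ℂ) ^ m
      = ((p1.eval x : ℝ) : ℂ) + Complex.I * ((p2.eval x : ℝ) : ℂ) := by
    have e1 : p1.eval x = ∑ m ∈ Finset.range n, p1.coeff m * x ^ m :=
      Polynomial.eval_eq_sum_range' (by omega : p1.natDegree < n) x
    have e2 : p2.eval x = ∑ m ∈ Finset.range n, p2.coeff m * x ^ m :=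
      Polynomial.eval_eq_sum_range' (by omega : p2.natDegree < n) x
    rw [e1, e2]
    push_cast
    rw [Finset.mul_sum, ← Finset.sum_add_distrib]
    apply Finset.sum_congr rfl
    intro m _
    ring
  rw [hsum]
  have hdecomp : f₀ x - (((p1.eval x : ℝ) : ℂ) + Complex.I * ((p2.eval x : ℝ) : ℂ))
      = (((f₀ x).re - p1.eval x : ℝ) : ℂ)
        + Complex.I * (((f₀ x).im - p2.eval x : ℝ) : ℂ) := by
    have : f₀ x = ((f₀ x).re : ℂ) + Complex.I * ((f₀ x).im : ℂ) := by
      rw [mul_comm]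
      exact (Complex.re_add_im (f₀ x)).symm
    conv_lhs => rw [this]
    push_cast
    ring
  rw [hdecomp]
  calc ‖(((f₀ x).re - p1.eval x : ℝ) : ℂ) + Complex.I * (((f₀ x).im - p2.eval x : ℝ) : ℂ)‖
      ≤ ‖(((f₀ x).re - p1.eval x : ℝ) : ℂ)‖ + ‖Complex.I * (((f₀ x).im - p2.eval x : ℝ) : ℂ)‖ :=
        norm_add_le _ _
    _ = |(f₀ x).re - p1.eval x| + |(f₀ x).im - p2.eval x| := by
        rw [norm_mul, Complex.norm_I, one_mul, Complex.norm_real, Complex.norm_real]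
        rfl
    _ ≤ ε := by
        have h1 := hp1 ⟨x, hx⟩
        have h2 := hp2 ⟨x, hx⟩
        simp only [hgre, hgim, ContinuousMap.coe_mk] at h1 h2
        linarith

section Abstract2
variable {E : Type*} [NormedAddCommGroup E] [InnerProductSpace ℂ E]

lemma infDist_proj (V : Submodule ℂ E) [Submodule.HasOrthogonalProjection V] (f : E) :
    Metric.infDist f (V : Set E) = ‖f - Submodule.orthogonalProjectionOnto V f‖ := by
  rw [Metric.infDist_eq_iInf, ← Submodule.starProjection_apply, Submodule.starProjection_minimal]
  simp_rw [dist_eq_norm]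
  rfl

lemma dist_combo (x : ℕ → E)
    (hx : ∀ a b : ℕ, ⟪x a, x b⟫ = ((((a:ℝ) + b + 1)⁻¹ : ℝ) : ℂ))
    (S T : Finset ℕ) (hTS : ∀ m ∈ T, m ∉ S) (c : ℕ → ℂ) :
    (Metric.infDist (∑ m ∈ T, c m • x m) (Vspan x S : Set E)) ^ 2
      = (∑ m ∈ T, ∑ l ∈ T, (starRingEnd ℂ) (c m) * c l * ((Phi m l S : ℝ) : ℂ)).re := by
  letI := hasProj x S
  set f := ∑ m ∈ T, c m • x m with hf
  set rr := ∑ m ∈ T, c m • resid x S m with hrr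
  have hfr : f - rr = ∑ m ∈ T, c m • (x m - resid x S m) := by
    rw [hf, hrr, ← Finset.sum_sub_distrib]
    apply Finset.sum_congr rfl
    intro m _
    rw [smul_sub]
  have h1 : f - rr ∈ Vspan x S := by
    rw [hfr]
    exact Submodule.sum_mem _ (fun m _ => Submodule.smul_mem _ _ (x_sub_resid_mem x S m))
  have h2 : rr ∈ (Vspan x S)ᗮ := by
    rw [hrr]
    exact Submodule.sum_mem _ (fun m _ => Submodule.smul_mem _ _ (resid_mem_orthogonal x S m))
  have hP : (Submodule.orthogonalProjectionOnto (Vspan x S) f : E) = f - rr := by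
    refine Submodule.eq_starProjection_of_mem_of_inner_eq_zero h1 ?_
    intro w hw
    have he : f - (f - rr) = rr := by abel
    rw [he]
    exact (Submodule.mem_orthogonal' _ _).mp h2 w hw
  have hdist : Metric.infDist f (Vspan x S : Set E) = ‖rr‖ := by
    rw [infDist_proj, hP]
    congr 1
    abel
  have hrf : ⟪rr, f⟫ = ∑ m ∈ T, ∑ l ∈ T,
      (starRingEnd ℂ) (c m) * c l * ((Phi m l S : ℝ) : ℂ) := by
    have per : ∀ l ∈ T, ⟪rr, c l • x l⟫
        = ∑ m ∈ T, (starRingEnd ℂ) (c m) * c l * ((Phi m l S : ℝ) : ℂ) := by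
      intro l hl
      rw [inner_smul_right, hrr, sum_inner, Finset.mul_sum]
      apply Finset.sum_congr rfl
      intro m hm
      rw [inner_smul_left, resid_inner x hx S m l (hTS m hm) (hTS l hl)]
      ring
    rw [hf, inner_sum, Finset.sum_congr rfl per, Finset.sum_comm]
  have hrr2 : ⟪rr, rr⟫ = ⟪rr, f⟫ := by
    nth_rewrite 2 [show rr = f - (f - rr) by abel]
    rw [inner_sub_right, (Submodule.mem_orthogonal' _ _).mp h2 _ h1, sub_zero]
  rw [hdist, norm_sq_eq_re_inner (𝕜 := ℂ), hrr2, hrf]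
  rfl
end Abstract2

lemma dense_combo (mono : ℕ → Lp ℂ 2 mu01)
    (hmono : ∀ k : ℕ, (mono k : ℝ → ℂ) =ᵐ[mu01] fun x => (x : ℂ) ^ k)
    (f : Lp ℂ 2 mu01) (ε : ℝ) (hε : 0 < ε) :
    ∃ (T : Finset ℕ) (c : ℕ → ℂ), ‖f - ∑ m ∈ T, c m • mono m‖ < ε := by
  have hdense := Lp.boundedContinuousFunction_dense (E := ℂ) (μ := mu01) (p := 2)
    (by norm_num)
  obtain ⟨g, hgmem, hgdist⟩ := hdense.exists_dist_lt f (show 0 < ε/2 by linarith)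
  obtain ⟨f₀, hf₀⟩ := Lp.mem_boundedContinuousFunction_iff.mp hgmem
  have hgf : (g : ℝ → ℂ) =ᵐ[mu01] ⇑f₀ := by
    have h := ContinuousMap.coeFn_toAEEqFun mu01 f₀.toContinuousMap
    rw [hf₀] at h
    exact h
  obtain ⟨T, c, hTc⟩ := sw_poly_complex f₀ (ε/4) (by linarith)
  refine ⟨T, c, ?_⟩
  have hae : ∀ᵐ x ∂mu01, x ∈ Set.Icc (0:ℝ) 1 := by
    have : mu01 = volume.restrict (Set.Icc 0 1) := rfl
    rw [this]
    exact ae_restrict_mem measurableSet_Icc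
  have hbound : ∀ᵐ x ∂mu01, ‖(↑(g - ∑ m ∈ T, c m • mono m) : ℝ → ℂ) x‖ ≤ ε/4 := by
    filter_upwards [Lp.coeFn_sub g (∑ m ∈ T, c m • mono m), hgf,
      coeFn_combo mono hmono T c, hae] with x h1 h2 h3 h4
    rw [h1, Pi.sub_apply, h2, h3]
    simpa [pfun] using hTc x h4
  have hnorm2 : ‖g - ∑ m ∈ T, c m • mono m‖ ≤ ε/4 := by
    rw [Lp.norm_def]
    have hle := eLpNorm_le_of_ae_bound (p := 2) (μ := mu01) hbound
    rw [mu01_univ, ENNReal.one_rpow, one_mul] at hle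
    calc (eLpNorm (↑(g - ∑ m ∈ T, c m • mono m)) 2 mu01).toReal
        ≤ (ENNReal.ofReal (ε/4)).toReal := ENNReal.toReal_mono ENNReal.ofReal_ne_top hle
      _ = ε/4 := ENNReal.toReal_ofReal (by linarith)
  have hsplit : f - ∑ m ∈ T, c m • mono m
      = (f - g) + (g - ∑ m ∈ T, c m • mono m) := by abel
  calc ‖f - ∑ m ∈ T, c m • mono m‖
      ≤ ‖f - g‖ + ‖g - ∑ m ∈ T, c m • mono m‖ := by rw [hsplit]; exact norm_add_le _ _
    _ < ε/2 + ε/4 := by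
        rw [← dist_eq_norm]
        exact add_lt_add_of_lt_of_le hgdist hnorm2
    _ < ε := by linarith

lemma Phi_tendsto (N : ℕ → ℕ) (hNle : ∀ n, n ≤ N n) (ρ : ℝ)
    (hρ : Tendsto (fun n : ℕ => (n : ℝ) / ((n : ℝ) + (N n : ℝ) + 1)) atTop (𝓝 ρ))
    (m l : ℕ) :
    Tendsto (fun n => Phi m l (Finset.Icc n (n + N n))) atTop
      (𝓝 ((ρ^2) ^ (m+l+1) / ((m:ℝ) + l + 1))) := by
  have hA := Aprod_tendsto N hNle ρ hρ m
  have hB := Aprod_tendsto N hNle ρ hρ l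
  have hval : (ρ^2) ^ (m+l+1) / ((m:ℝ) + l + 1)
      = ((m:ℝ) + l + 1)⁻¹ * (ρ^(2*m+1) * ρ^(2*l+1)) := by
    rw [← pow_add, ← pow_mul]
    have : 2*m+1 + (2*l+1) = 2*(m+l+1) := by omega
    rw [this]
    ring
  rw [hval]
  have hprodeq : ∀ n : ℕ, Phi m l (Finset.Icc n (n + N n))
      = ((m:ℝ) + l + 1)⁻¹ *
        ((∏ k ∈ Finset.Icc n (n + N n), (((k:ℝ) - m)/((k:ℝ) + m + 1)))
          * (∏ k ∈ Finset.Icc n (n + N n), (((k:ℝ) - l)/((k:ℝ) + l + 1)))) := by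
    intro n
    rw [Phi, ← Finset.prod_mul_distrib]
    congr 1
    apply Finset.prod_congr rfl
    intro k _
    rw [gfac, div_mul_div_comm]
    congr 1 <;> ring
  simp_rw [hprodeq]
  exact tendsto_const_nhds.mul (hA.mul hB)

lemma master_combo (N : ℕ → ℕ) (hNle : ∀ n, n ≤ N n) (ρ : ℝ)
    (mono : ℕ → Lp ℂ 2 mu01)
    (hmono : ∀ k : ℕ, (mono k : ℝ → ℂ) =ᵐ[mu01] fun x => (x : ℂ) ^ k)
    (hρ : Tendsto (fun n : ℕ => (n : ℝ) / ((n : ℝ) + (N n : ℝ) + 1)) atTop (𝓝 ρ))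
    (hr1 : ρ^2 ≤ 1) (T : Finset ℕ) (c : ℕ → ℂ) :
    Tendsto (fun n => Metric.infDist (∑ m ∈ T, c m • mono m)
      (Mn N mono n : Set (Lp ℂ 2 mu01))) atTop (𝓝 ‖QLp (ρ^2) (∑ m ∈ T, c m • mono m)‖) := by
  set Fc := (∑ m ∈ T, c m • mono m : Lp ℂ 2 mu01) with hFc
  have hx := mono_inner mono hmono
  have hsq : Tendsto (fun n => (Metric.infDist Fc (Mn N mono n : Set (Lp ℂ 2 mu01)))^2)
      atTop (𝓝 (‖QLp (ρ^2) Fc‖^2)) := by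
    have hlim : Tendsto (fun n => (∑ m ∈ T, ∑ l ∈ T, (starRingEnd ℂ) (c m) * c l
        * ((Phi m l (Finset.Icc n (n + N n)) : ℝ) : ℂ)).re) atTop
        (𝓝 ((∑ m ∈ T, ∑ l ∈ T, (starRingEnd ℂ) (c m) * c l
        * ((((ρ^2)^(m+l+1) / ((m:ℝ) + l + 1)) : ℝ) : ℂ)).re)) := by
      apply (Complex.continuous_re.tendsto _).comp
      apply tendsto_finset_sum
      intro m _
      apply tendsto_finset_sum
      intro l _
      apply Tendsto.const_mul
      exact (Complex.continuous_ofReal.tendsto _).comp (Phi_tendsto N hNle ρ hρ m l)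
    rw [hFc, QLp_norm_sq (ρ^2) (sq_nonneg ρ) hr1 mono hmono T c]
    apply Tendsto.congr' _ hlim
    filter_upwards [eventually_ge_atTop (T.sup id + 1)] with n hn
    have hTS : ∀ m ∈ T, m ∉ Finset.Icc n (n + N n) := by
      intro m hm
      rw [Finset.mem_Icc]
      have : m ≤ T.sup id := Finset.le_sup (f := id) hm
      omega
    have hMn : Mn N mono n = Vspan mono (Finset.Icc n (n + N n)) := by
      rw [Mn, Vspan, Finset.coe_Icc]
    rw [hMn]
    exact (dist_combo mono hx _ T hTS c).symm
  have h1 := (Real.continuous_sqrt.tendsto _).comp hsq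
  simp only [Function.comp_def] at h1
  have h2 : (fun n => Real.sqrt ((Metric.infDist Fc (Mn N mono n : Set (Lp ℂ 2 mu01)))^2))
      = fun n => Metric.infDist Fc (Mn N mono n : Set (Lp ℂ 2 mu01)) := by
    funext n
    exact Real.sqrt_sq Metric.infDist_nonneg
  rw [h2, Real.sqrt_sq (norm_nonneg _)] at h1
  exact h1

lemma master_all (N : ℕ → ℕ) (hNle : ∀ n, n ≤ N n) (ρ : ℝ)
    (mono : ℕ → Lp ℂ 2 mu01)
    (hmono : ∀ k : ℕ, (mono k : ℝ → ℂ) =ᵐ[mu01] fun x => (x : ℂ) ^ k)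
    (hρ : Tendsto (fun n : ℕ => (n : ℝ) / ((n : ℝ) + (N n : ℝ) + 1)) atTop (𝓝 ρ))
    (hr1 : ρ^2 ≤ 1) (f : Lp ℂ 2 mu01) :
    Tendsto (fun n => Metric.infDist f (Mn N mono n : Set (Lp ℂ 2 mu01))) atTop
      (𝓝 ‖QLp (ρ^2) f‖) := by
  rw [Metric.tendsto_atTop]
  intro ε hε
  obtain ⟨T, c, hc⟩ := dense_combo mono hmono f (ε/3) (by linarith)
  set Fc := (∑ m ∈ T, c m • mono m : Lp ℂ 2 mu01) with hFc
  have h1 := master_combo N hNle ρ mono hmono hρ hr1 T c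
  rw [Metric.tendsto_atTop] at h1
  obtain ⟨n₀, hn₀⟩ := h1 (ε/3) (by linarith)
  refine ⟨n₀, fun n hn => ?_⟩
  have hd1 : |Metric.infDist f (Mn N mono n : Set (Lp ℂ 2 mu01))
      - Metric.infDist Fc (Mn N mono n : Set (Lp ℂ 2 mu01))| ≤ ‖f - Fc‖ := by
    rw [abs_sub_le_iff]
    constructor
    · have := Metric.infDist_le_infDist_add_dist
        (x := f) (y := Fc) (s := (Mn N mono n : Set (Lp ℂ 2 mu01)))
      rw [dist_eq_norm] at this
      linarith
    · have := Metric.infDist_le_infDist_add_dist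
        (x := Fc) (y := f) (s := (Mn N mono n : Set (Lp ℂ 2 mu01)))
      rw [dist_eq_norm, norm_sub_rev] at this
      linarith
  have hd3 : |‖QLp (ρ^2) Fc‖ - ‖QLp (ρ^2) f‖| ≤ ‖f - Fc‖ := by
    calc |‖QLp (ρ^2) Fc‖ - ‖QLp (ρ^2) f‖| ≤ ‖QLp (ρ^2) Fc - QLp (ρ^2) f‖ :=
          abs_norm_sub_norm_le _ _
      _ ≤ ‖Fc - f‖ := QLp_lipschitz _ _ _
      _ = ‖f - Fc‖ := norm_sub_rev _ _
  have hd2 := hn₀ n hn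
  rw [Real.dist_eq] at hd2 ⊢
  have : |Metric.infDist f (Mn N mono n : Set (Lp ℂ 2 mu01)) - ‖QLp (ρ^2) f‖|
      ≤ |Metric.infDist f (Mn N mono n : Set (Lp ℂ 2 mu01))
          - Metric.infDist Fc (Mn N mono n : Set (Lp ℂ 2 mu01))|
        + |Metric.infDist Fc (Mn N mono n : Set (Lp ℂ 2 mu01)) - ‖QLp (ρ^2) Fc‖|
        + |‖QLp (ρ^2) Fc‖ - ‖QLp (ρ^2) f‖| := by
    apply abs_sub_le _ _ _ |>.trans
    gcongr
    exact abs_sub_le _ _ _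
  linarith

/-- **Asymptotic Müntz–Szász theorem, `L²` case.** Let `{N_n}` be an increasing
sequence of naturals, `𝓜_n = span{xⁿ, …, x^{n+N_n}} ⊆ L²[0,1]`,
`ρ_n = n/(n+N_n+1)` and `𝓜_∞ = {f : dist(f, 𝓜_n) → 0}`.  If `ρ_n → ρ`, then
`𝓜_∞ = L²[ρ², 1]`, the set of functions vanishing a.e. on `[0, ρ²]`. -/
theorem asymptotic_muntz_szasz_L2 (N : ℕ → ℕ) (hN : StrictMono N) (ρ : ℝ)
    (mono : ℕ → Lp ℂ 2 mu01)
    (hmono : ∀ k : ℕ, (mono k : ℝ → ℂ) =ᵐ[mu01] fun x => (x : ℂ) ^ k)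
    (hρ : Tendsto (fun n : ℕ => (n : ℝ) / ((n : ℝ) + (N n : ℝ) + 1)) atTop (𝓝 ρ)) :
    Minf N mono =
      {f : Lp ℂ 2 mu01 | ∀ᵐ x ∂mu01, x ∈ Set.Icc 0 (ρ ^ 2) → f x = 0} := by
  have hNle : ∀ n, n ≤ N n := fun n => hN.le_apply
  have hρ1 : ρ ≤ 1 := by
    apply le_of_tendsto' hρ
    intro n
    rw [div_le_one (by positivity)]
    have : (0:ℝ) ≤ (N n : ℝ) := Nat.cast_nonneg _
    linarith
  have hρ0 : 0 ≤ ρ := by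
    apply ge_of_tendsto' hρ
    intro n
    positivity
  have hr1 : ρ^2 ≤ 1 := by nlinarith
  ext f
  have hmaster := master_all N hNle ρ mono hmono hρ hr1 f
  constructor
  · intro hf
    have h0 : Tendsto (fun n => Metric.infDist f (Mn N mono n : Set (Lp ℂ 2 mu01)))
        atTop (𝓝 0) := hf
    have := tendsto_nhds_unique hmaster h0
    exact (QLp_norm_zero_iff (ρ^2) f).mp this
  · intro hf
    have hz : ‖QLp (ρ^2) f‖ = 0 := (QLp_norm_zero_iff (ρ^2) f).mpr hf
    show Tendsto _ atTop (𝓝 0)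
    rw [← hz]
    exact hmaster
end
end

section
/- For natural numbers n ≥ 1 and N_n ≥ 0, the L² distance from the constant function 1 to the span of the monomials {xⁿ, x^{n+1}, …, x^{n+N_n}} in L²[0,1] equals n/(n+N_n+1). -/
open MeasureTheory Filter Topology Finset Polynomial



lemma pf_sum {ι : Type*} [DecidableEq ι] (t : Finset ι) (x : ι → ℝ)
    (hx : Set.InjOn x t) (f : Polynomial ℝ) (hf : f.degree < t.card) (s : ℝ)
    (hs : ∀ i ∈ t, s ≠ x i) :
    ∑ i ∈ t, f.eval (x i) / ((s - x i) * ∏ j ∈ t.erase i, (x i - x j)) =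
      f.eval s / ∏ i ∈ t, (s - x i) := by
  have hinterp := Lagrange.eq_interpolate hx hf
  conv_rhs => rw [hinterp]
  rw [Lagrange.interpolate_apply, eval_finset_sum, sum_div]
  refine Finset.sum_congr rfl fun i hi => ?_
  have hsxi : s - x i ≠ 0 := sub_ne_zero.2 (hs i hi)
  have hE : ∏ j ∈ t.erase i, (s - x j) ≠ 0 :=
    Finset.prod_ne_zero_iff.2 fun j hj => sub_ne_zero.2 (hs j (Finset.mem_of_mem_erase hj))
  have hD : ∏ j ∈ t.erase i, (x i - x j) ≠ 0 := by
    refine Finset.prod_ne_zero_iff.2 fun j hj => sub_ne_zero.2 ?_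
    exact fun h => (Finset.mem_erase.1 hj).1 (hx (Finset.mem_of_mem_erase hj) hi h.symm)
  have hP : ∏ j ∈ t, (s - x j) = (s - x i) * ∏ j ∈ t.erase i, (s - x j) :=
    (Finset.mul_prod_erase t _ hi).symm
  rw [hP, eval_mul, eval_C, Lagrange.basis, eval_prod]
  have hbd : ∀ j ∈ t.erase i, eval s (Lagrange.basisDivisor (x i) (x j)) =
      (x i - x j)⁻¹ * (s - x j) := by
    intro j hj; simp [Lagrange.basisDivisor]
  rw [Finset.prod_congr rfl hbd, Finset.prod_mul_distrib, Finset.prod_inv_distrib]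
  field_simp

lemma tele (n N : ℕ) :
    ((n:ℝ)+N+1) * ∏ i ∈ Finset.range (N+1), ((n:ℝ)+i) =
      (n:ℝ) * ∏ i ∈ Finset.range (N+1), ((n:ℝ)+i+1) := by
  induction N with
  | zero => simp; ring
  | succ N ih =>
      rw [Finset.prod_range_succ (fun i => ((n:ℝ)+i)) (N+1),
        Finset.prod_range_succ (fun i => ((n:ℝ)+i+1)) (N+1)]
      push_cast
      push_cast at ih
      nlinarith [ih]

lemma exists_coeffs (n N : ℕ) (hn : 1 ≤ n) :
    ∃ c : ℕ → ℝ,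
      (∀ l : ℕ, l ≤ N →
        ∑ i ∈ Finset.range (N+1), c i / (((n:ℝ)+l) + ((n:ℝ)+i+1)) = 1/(((n:ℝ)+l)+1)) ∧
      ∑ i ∈ Finset.range (N+1), c i / ((n:ℝ)+i+1) = 1 - ((n:ℝ)/((n:ℝ)+N+1))^2 := by
  have hn' : (1:ℝ) ≤ (n:ℝ) := by exact_mod_cast hn
  set A : ℝ := (n:ℝ)/((n:ℝ)+N+1) with hA
  have hden : ((n:ℝ)+N+1) ≠ 0 := by positivity
  set x : ℕ → ℝ := fun i => if i ≤ N then -((n:ℝ)+i+1) else -1 with hxdef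
  set f : Polynomial ℝ :=
    (∏ i ∈ Finset.range (N+1), (Polynomial.X + Polynomial.C ((n:ℝ)+i+1)))
      - Polynomial.C A * ∏ l ∈ Finset.range (N+1), (Polynomial.C ((n:ℝ)+l) - Polynomial.X)
      with hfdef
  -- evaluation of f
  have hfeval : ∀ s : ℝ, f.eval s =
      (∏ i ∈ Finset.range (N+1), (s + ((n:ℝ)+i+1)))
        - A * ∏ l ∈ Finset.range (N+1), (((n:ℝ)+l) - s) := by
    intro s
    simp [hfdef, eval_prod]
  -- injectivity of nodes
  have hinj : Set.InjOn x (Finset.range (N+2)) := by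
    intro i hi j hj hij
    simp only [Finset.coe_range, Set.mem_Iio] at hi hj
    by_cases h1 : i ≤ N <;> by_cases h2 : j ≤ N <;>
      simp only [hxdef, h1, h2, if_true, if_false, if_pos, if_neg, neg_inj] at hij
    · have : (i:ℝ) = j := by linarith
      exact_mod_cast this
    · exfalso; have : (n:ℝ) + i = 0 := by linarith
      have hi0 : (0:ℝ) ≤ (i:ℝ) := Nat.cast_nonneg i
      linarith
    · exfalso; have : (n:ℝ) + j = 0 := by linarith
      have hj0 : (0:ℝ) ≤ (j:ℝ) := Nat.cast_nonneg j
      linarith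
    · omega
  -- degree bound
  have hcard : (Finset.range (N+2)).card = N+2 := Finset.card_range _
  have hdeg : f.degree < ((Finset.range (N+2)).card : ℕ) := by
    rw [hcard]
    have h1 : (∏ i ∈ Finset.range (N+1),
        (Polynomial.X + Polynomial.C ((n:ℝ)+i+1))).degree ≤ ((N+1 : ℕ) : WithBot ℕ) := by
      refine le_trans (degree_prod_le _ _) ?_
      rw [Finset.sum_congr rfl (fun (i : ℕ) _ => degree_X_add_C ((n:ℝ)+(i:ℝ)+1)),
        Finset.sum_const, Finset.card_range]
      simp
    have h2 : (∏ l ∈ Finset.range (N+1),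
        (Polynomial.C ((n:ℝ)+l) - Polynomial.X)).degree ≤ ((N+1 : ℕ) : WithBot ℕ) := by
      refine le_trans (degree_prod_le _ _) ?_
      have heach : ∀ l ∈ Finset.range (N+1),
          (Polynomial.C ((n:ℝ)+l) - Polynomial.X).degree = 1 := by
        intro l _
        have : Polynomial.C ((n:ℝ)+l) - Polynomial.X = -(Polynomial.X - Polynomial.C ((n:ℝ)+l)) := by
          ring
        rw [this, degree_neg, degree_X_sub_C]
      rw [Finset.sum_congr rfl heach, Finset.sum_const, Finset.card_range]
      simp
    have h3 : (Polynomial.C A * ∏ l ∈ Finset.range (N+1),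
        (Polynomial.C ((n:ℝ)+l) - Polynomial.X)).degree ≤ ((N+1 : ℕ) : WithBot ℕ) := by
      refine le_trans (degree_mul_le _ _) ?_
      refine le_trans (add_le_add degree_C_le h2) ?_
      simp
    refine lt_of_le_of_lt (le_trans (degree_sub_le _ _) (max_le h1 h3)) ?_
    exact_mod_cast WithBot.coe_lt_coe.2 (by omega : N+1 < N+2)
  -- nodes helpers
  have hxle : ∀ i : ℕ, i ≤ N → x i = -((n:ℝ)+i+1) := by
    intro i h; simp [hxdef, h]
  have hxlast : x (N+1) = -1 := by simp [hxdef]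
  set D : ℕ → ℝ := fun i => ∏ j ∈ (Finset.range (N+2)).erase i, (x i - x j) with hDdef
  set c : ℕ → ℝ := fun i => f.eval (x i) / D i with hcdef
  -- f(-1) = 0
  have hfm1 : f.eval (-1) = 0 := by
    rw [hfeval]
    have e1 : ∏ i ∈ Finset.range (N+1), ((-1:ℝ) + ((n:ℝ)+i+1)) =
        ∏ i ∈ Finset.range (N+1), ((n:ℝ)+i) :=
      Finset.prod_congr rfl fun i _ => by ring
    have e2 : ∏ l ∈ Finset.range (N+1), (((n:ℝ)+l) - (-1)) =
        ∏ i ∈ Finset.range (N+1), ((n:ℝ)+i+1) :=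
      Finset.prod_congr rfl fun i _ => by ring
    rw [e1, e2, hA, sub_eq_zero, div_mul_eq_mul_div, eq_div_iff hden]
    linear_combination tele n N
  have hclast : c (N+1) = 0 := by
    simp [hcdef, hxlast, hfm1]
  -- the master identity
  have main : ∀ s : ℝ, (∀ i ∈ Finset.range (N+2), s ≠ x i) →
      ∑ i ∈ Finset.range (N+1), c i / (s + ((n:ℝ)+i+1)) =
        f.eval s / ((∏ i ∈ Finset.range (N+1), (s + ((n:ℝ)+i+1))) * (s+1)) := by
    intro s hs
    have h0 := pf_sum (Finset.range (N+2)) x hinj f hdeg s hs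
    rw [Finset.sum_range_succ] at h0
    have hlast0 : f.eval (x (N+1)) /
        ((s - x (N+1)) * ∏ j ∈ (Finset.range (N+2)).erase (N+1), (x (N+1) - x j)) = 0 := by
      rw [hxlast, hfm1, zero_div]
    rw [hlast0, add_zero] at h0
    have hsum : ∀ i ∈ Finset.range (N+1),
        f.eval (x i) / ((s - x i) * ∏ j ∈ (Finset.range (N+2)).erase i, (x i - x j)) =
          c i / (s + ((n:ℝ)+i+1)) := by
      intro i hi
      have hiN : i ≤ N := by have := Finset.mem_range.1 hi; omega
      simp only [hcdef]
      rw [show (∏ j ∈ (Finset.range (N+2)).erase i, (x i - x j)) = D i from rfl]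
      rw [div_div, hxle i hiN]
      congr 1
      ring
    rw [Finset.sum_congr rfl hsum] at h0
    have hprod : ∏ i ∈ Finset.range (N+2), (s - x i) =
        (∏ i ∈ Finset.range (N+1), (s + ((n:ℝ)+i+1))) * (s+1) := by
      rw [Finset.prod_range_succ, hxlast]
      have : ∀ i ∈ Finset.range (N+1), s - x i = s + ((n:ℝ)+i+1) := by
        intro i hi
        rw [hxle i (by have := Finset.mem_range.1 hi; omega)]; ring
      rw [Finset.prod_congr rfl this]
      ring
    rw [hprod] at h0
    exact h0
  refine ⟨c, ?_, ?_⟩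
  · -- orthogonality identities
    intro l hl
    set s : ℝ := (n:ℝ) + l with hsdef
    have hs0 : 0 ≤ s := by positivity
    have hsne : ∀ i ∈ Finset.range (N+2), s ≠ x i := by
      intro i _
      rcases le_or_gt i N with h | h
      · rw [hxle i h]
        have : (0:ℝ) < (n:ℝ)+i+1 := by positivity
        intro hE; linarith
      · have : x i = -1 := by simp [hxdef, Nat.lt_irrefl, not_le.2 h]
        rw [this]; intro hE; linarith
    have h0 := main s hsne
    have hP : ∏ i ∈ Finset.range (N+1), (s + ((n:ℝ)+i+1)) ≠ 0 := by
      refine Finset.prod_ne_zero_iff.2 fun i _ => ?_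
      positivity
    have hfz : f.eval s = ∏ i ∈ Finset.range (N+1), (s + ((n:ℝ)+i+1)) := by
      rw [hfeval]
      have : ∏ m ∈ Finset.range (N+1), (((n:ℝ)+m) - s) = 0 := by
        refine Finset.prod_eq_zero (Finset.mem_range.2 (by omega : l < N+1)) ?_
        rw [hsdef]; ring
      rw [this, mul_zero, sub_zero]
    rw [hfz] at h0
    have hs1 : s + 1 ≠ 0 := by positivity
    rw [h0]
    field_simp
  · -- distance identity at s = 0
    have hsne : ∀ i ∈ Finset.range (N+2), (0:ℝ) ≠ x i := by
      intro i _
      rcases le_or_gt i N with h | h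
      · rw [hxle i h]
        have : (0:ℝ) < (n:ℝ)+i+1 := by positivity
        intro hE; linarith
      · have : x i = -1 := by simp [hxdef, not_le.2 h]
        rw [this]; norm_num
    have h0 := main 0 hsne
    have hc0 : ∀ i ∈ Finset.range (N+1), c i / ((0:ℝ) + ((n:ℝ)+i+1)) = c i / ((n:ℝ)+i+1) := by
      intro i _; rw [zero_add]
    rw [Finset.sum_congr rfl hc0] at h0
    have hprod0 : ∏ i ∈ Finset.range (N+1), ((0:ℝ) + ((n:ℝ)+i+1)) =
        ∏ i ∈ Finset.range (N+1), ((n:ℝ)+i+1) :=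
      Finset.prod_congr rfl fun i _ => by ring
    have hPa : ∏ i ∈ Finset.range (N+1), ((n:ℝ)+i+1) ≠ 0 := by
      refine Finset.prod_ne_zero_iff.2 fun i _ => ?_
      positivity
    have hAl : ∏ l ∈ Finset.range (N+1), ((n:ℝ)+l) =
        A * ∏ i ∈ Finset.range (N+1), ((n:ℝ)+i+1) := by
      rw [hA, div_mul_eq_mul_div, eq_div_iff hden]
      linear_combination tele n N
    have hf0 : f.eval 0 = (1 - A^2) * ∏ i ∈ Finset.range (N+1), ((n:ℝ)+i+1) := by
      rw [hfeval]
      have e1 : ∏ l ∈ Finset.range (N+1), (((n:ℝ)+l) - 0) =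
          ∏ l ∈ Finset.range (N+1), ((n:ℝ)+l) :=
        Finset.prod_congr rfl fun i _ => by ring
      rw [hprod0, e1, hAl]
      ring
    rw [hf0, hprod0] at h0
    rw [h0, hA]
    field_simp
    ring

lemma integral_mono_pow (m : ℕ) : ∫ x, (x:ℂ)^m ∂mu01 = 1/((m:ℂ)+1) := by
  have h1 : ∀ x : ℝ, (x:ℂ)^m = ((x^m : ℝ) : ℂ) := by intro x; push_cast; ring
  simp_rw [h1]
  rw [mu01, MeasureTheory.integral_Icc_eq_integral_Ioc,
    ← intervalIntegral.integral_of_le (zero_le_one : (0:ℝ) ≤ 1),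
    intervalIntegral.integral_ofReal, integral_pow]
  push_cast
  norm_num

lemma inner_mono_pow (a b : ℕ) (g h : Lp ℂ 2 mu01)
    (hg : (g : ℝ → ℂ) =ᵐ[mu01] fun x => (x:ℂ)^a)
    (hh : (h : ℝ → ℂ) =ᵐ[mu01] fun x => (x:ℂ)^b) :
    inner (𝕜 := ℂ) g h = 1/((a:ℂ)+(b:ℂ)+1) := by
  rw [MeasureTheory.L2.inner_def]
  have hae : (fun x => inner (𝕜 := ℂ) (g x) (h x)) =ᵐ[mu01] fun x : ℝ => (x:ℂ)^(a+b) := by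
    filter_upwards [hg, hh] with x hx1 hx2
    simp only [hx1, hx2, RCLike.inner_apply]
    rw [← Complex.ofReal_pow x a, Complex.conj_ofReal]
    push_cast
    ring
  rw [integral_congr_ae hae, integral_mono_pow]
  push_cast
  ring

/-- For `n ≥ 1` and any `Nn`, the `L²` distance from the constant function `1`
(represented by `one`) to `span{xⁿ, …, x^{n+Nn}}` in `L²[0,1]` equals
`n/(n+Nn+1)`.  Here `mono k` represents the monomial `xᵏ`. -/
theorem dist_one_span_monomials (n Nn : ℕ) (hn : 1 ≤ n)
    (one : Lp ℂ 2 mu01) (hone : (one : ℝ → ℂ) =ᵐ[mu01] fun _ => (1 : ℂ))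
    (mono : ℕ → Lp ℂ 2 mu01)
    (hmono : ∀ k : ℕ, (mono k : ℝ → ℂ) =ᵐ[mu01] fun x => (x : ℂ) ^ k) :
    Metric.infDist one
        (Submodule.span ℂ (mono '' Set.Icc n (n + Nn)) : Set (Lp ℂ 2 mu01)) =
      (n : ℝ) / ((n : ℝ) + (Nn : ℝ) + 1) := by
  classical
  obtain ⟨c, hkey, hkey0⟩ := exists_coeffs n Nn hn
  have hone0 : (one : ℝ → ℂ) =ᵐ[mu01] fun x : ℝ => (x:ℂ)^0 := by
    filter_upwards [hone] with x hx
    simp [hx]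
  set d : ℝ := (n:ℝ)/((n:ℝ)+(Nn:ℝ)+1) with hd
  have hd0 : 0 ≤ d := by positivity
  set K : Submodule ℂ (Lp ℂ 2 mu01) := Submodule.span ℂ (mono '' Set.Icc n (n + Nn)) with hK
  set p : Lp ℂ 2 mu01 := ∑ i ∈ Finset.range (Nn+1), (c i : ℂ) • mono (n+i) with hp
  have hpK : p ∈ K := by
    refine Submodule.sum_mem _ fun i hi => Submodule.smul_mem _ _ (Submodule.subset_span ?_)
    refine ⟨n+i, ⟨Nat.le_add_right _ _, ?_⟩, rfl⟩
    have := Finset.mem_range.1 hi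
    omega
  set q : Lp ℂ 2 mu01 := one - p with hq
  have hinner_mono_one : ∀ k : ℕ, inner (𝕜 := ℂ) (mono k) one = 1/((k:ℂ)+1) := by
    intro k
    have := inner_mono_pow k 0 (mono k) one (hmono k) hone0
    simpa using this
  have hinner_one_mono : ∀ k : ℕ, inner (𝕜 := ℂ) one (mono k) = 1/((k:ℂ)+1) := by
    intro k
    have := inner_mono_pow 0 k one (mono k) hone0 (hmono k)
    simpa using this
  have hinner_q : ∀ k : ℕ, inner (𝕜 := ℂ) (mono k) q =
      1/((k:ℂ)+1) - ∑ i ∈ Finset.range (Nn+1), (c i : ℂ) / ((k:ℂ)+((n:ℂ)+(i:ℂ))+1) := by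
    intro k
    rw [hq, inner_sub_right, hp, inner_sum]
    congr 1
    · exact hinner_mono_one k
    · refine Finset.sum_congr rfl fun i _ => ?_
      rw [inner_smul_right, inner_mono_pow k (n+i) _ _ (hmono k) (hmono (n+i))]
      push_cast
      ring
  have hgen : ∀ k ∈ Set.Icc n (n+Nn), inner (𝕜 := ℂ) (mono k) q = 0 := by
    intro k hk
    obtain ⟨hk1, hk2⟩ := hk
    obtain ⟨l, rfl⟩ : ∃ l, k = n + l := ⟨k - n, by omega⟩
    have hl : l ≤ Nn := by omega
    rw [hinner_q]
    have hc := congrArg (fun t : ℝ => (t : ℂ)) (hkey l hl)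
    push_cast at hc
    push_cast
    rw [sub_eq_zero, ← hc]
    exact (Finset.sum_congr rfl fun i _ => by ring)
  -- q is orthogonal to K
  have hKle : K ≤ (ℂ ∙ q)ᗮ := by
    rw [hK, Submodule.span_le]
    rintro _ ⟨k, hk, rfl⟩
    rw [SetLike.mem_coe, Submodule.mem_orthogonal_singleton_iff_inner_right]
    have := hgen k hk
    rw [← inner_conj_symm, this, map_zero]
  have hqK : ∀ y ∈ K, inner (𝕜 := ℂ) q y = 0 := by
    intro y hy
    have := hKle hy
    rw [Submodule.mem_orthogonal_singleton_iff_inner_right] at this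
    exact this
  -- compute ⟪q, q⟫
  have hq_inner : inner (𝕜 := ℂ) q q = ((d^2 : ℝ) : ℂ) := by
    have h1 : inner (𝕜 := ℂ) q q = inner (𝕜 := ℂ) one q - inner (𝕜 := ℂ) p q := by
      rw [hq, inner_sub_left]
    have h2 : inner (𝕜 := ℂ) p q = 0 := by
      rw [← inner_conj_symm, hqK p hpK, map_zero]
    have h3 : inner (𝕜 := ℂ) one q = ((d^2 : ℝ) : ℂ) := by
      rw [hq, inner_sub_right, hp, inner_sum]
      have h4 : inner (𝕜 := ℂ) one one = (1:ℂ) := by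
        have := inner_mono_pow 0 0 one one hone0 hone0
        simpa using this
      have h5 : ∑ i ∈ Finset.range (Nn+1), inner (𝕜 := ℂ) one ((c i : ℂ) • mono (n+i)) =
          ∑ i ∈ Finset.range (Nn+1), (c i : ℂ) / ((n:ℂ)+(i:ℂ)+1) := by
        refine Finset.sum_congr rfl fun i _ => ?_
        rw [inner_smul_right, hinner_one_mono (n+i)]
        push_cast
        ring
      rw [h4, h5]
      have hc := congrArg (fun t : ℝ => (t : ℂ)) hkey0
      push_cast at hc
      rw [hc, hd]
      push_cast
      ring
    rw [h1, h2, h3, sub_zero]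
  have hnormq : ‖q‖ = d := by
    have h3 : ‖q‖^2 = d^2 := by
      have h := inner_self_eq_norm_sq (𝕜 := ℂ) (x := q)
      rw [hq_inner] at h
      simpa [← Complex.ofReal_pow] using h.symm
    nlinarith [norm_nonneg q, hd0]
  refine le_antisymm ?_ ?_
  · calc Metric.infDist one (K : Set (Lp ℂ 2 mu01)) ≤ dist one p :=
          Metric.infDist_le_dist_of_mem hpK
      _ = ‖q‖ := by rw [dist_eq_norm, hq]
      _ = d := hnormq
  · -- lower bound
    have hlow : ∀ y ∈ K, d ≤ dist one y := by
      intro y hy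
      have hy' : p - y ∈ K := K.sub_mem hpK hy
      have horto : inner (𝕜 := ℂ) q (p - y) = 0 := hqK _ hy'
      have hdecomp : one - y = q + (p - y) := by rw [hq]; abel
      have hpyth := norm_add_sq (𝕜 := ℂ) q (p - y)
      rw [horto] at hpyth
      simp only [map_zero, mul_zero, add_zero, zero_add] at hpyth
      rw [dist_eq_norm, hdecomp]
      nlinarith [norm_nonneg (q + (p - y)), norm_nonneg (p - y), hnormq, hpyth, hd0,
        sq_nonneg (‖p - y‖)]
    by_contra hcon
    push_neg at hcon
    obtain ⟨y, hy, hdy⟩ := (Metric.infDist_lt_iff ⟨0, K.zero_mem⟩).1 hcon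
    exact absurd hdy (not_lt.2 (hlow y hy))
end

section
/- Let α₁, …, α_N be distinct real numbers in (−1/2, ∞). Then the Gram matrix of the functions x^{α₁}, …, x^{α_N} in L²[0,1] satisfies det G(x^{α₁}, …, x^{α_N}) = ∏_{1≤j<i≤N}(α_i − α_j)² / ∏_{1≤i,j≤N}(α_i + α_j + 1). -/
open MeasureTheory Filter Topology

section CauchyAux
open Finset Matrix Polynomial MeasureTheory

lemma cauchy_det {n : ℕ} (x y : Fin n → ℝ) (hx : ∀ i j, x i + y j ≠ 0)
    (hy : Function.Injective y) :
    (Matrix.of fun i j => (x i + y j)⁻¹).det =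
      (∏ i, ∏ j ∈ Finset.Ioi i, ((x j - x i) * (y j - y i))) / ∏ i, ∏ j, (x i + y j) := by
  rcases Nat.eq_zero_or_pos n with hn | hn
  · subst hn
    simp [Matrix.det_fin_zero]
  set p : Fin n → ℝ[X] := fun j => ∏ k ∈ univ.erase j, (X + C (y k)) with hp
  have hdeg : ∀ j, (p j).natDegree < n := by
    intro j
    have h1 : (p j).natDegree ≤ ∑ k ∈ univ.erase j, (X + C (y k)).natDegree :=
      Polynomial.natDegree_prod_le _ _
    have h2 : ∀ k, (X + C (y k)).natDegree = 1 := fun k => natDegree_X_add_C _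
    simp only [h2, Finset.sum_const, smul_eq_mul, mul_one] at h1
    have h3 := Finset.card_erase_of_mem (Finset.mem_univ j)
    have h4 : (univ : Finset (Fin n)).card = n := by simp
    omega
  set B : Matrix (Fin n) (Fin n) ℝ := Matrix.of fun k j => (p j).coeff k with hB
  have heval : ∀ (j : Fin n) (t : ℝ), (p j).eval t = ∑ k : Fin n, (p j).coeff k * t ^ (k : ℕ) := by
    intro j t
    rw [Polynomial.eval_eq_sum_range' (hdeg j)]
    exact (Fin.sum_univ_eq_sum_range (fun k => (p j).coeff k * t ^ k) n).symm
  have hM : (Matrix.of fun i j => (p j).eval (x i)) = vandermonde x * B := by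
    ext i j
    rw [Matrix.mul_apply]
    simp only [Matrix.of_apply, vandermonde_apply, hB, Matrix.of_apply]
    rw [heval]
    exact Finset.sum_congr rfl (fun k _ => mul_comm _ _)
  have hD : vandermonde (fun i => -y i) * B =
      Matrix.diagonal (fun i => ∏ k ∈ univ.erase i, (y k - y i)) := by
    ext i j
    rw [Matrix.mul_apply]
    have : ∑ k : Fin n, vandermonde (fun i => -y i) i k * B k j = (p j).eval (-y i) := by
      rw [heval]
      exact Finset.sum_congr rfl (fun k _ => by
        simp [hB, vandermonde_apply, mul_comm])
    rw [this, hp]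
    simp only [eval_prod, eval_add, eval_X, eval_C]
    rcases eq_or_ne i j with rfl | hij
    · rw [Matrix.diagonal_apply_eq]
      exact Finset.prod_congr rfl (fun k _ => by ring)
    · rw [Matrix.diagonal_apply_ne _ hij]
      exact Finset.prod_eq_zero (Finset.mem_erase.mpr ⟨hij, Finset.mem_univ i⟩) (by ring)
  have hMval : (Matrix.of fun i j => (p j).eval (x i)) =
      Matrix.of fun i j => (∏ k, (x i + y k)) * (x i + y j)⁻¹ := by
    ext i j
    simp only [Matrix.of_apply, hp, eval_prod, eval_add, eval_X, eval_C]
    rw [← Finset.mul_prod_erase univ (fun k => x i + y k) (Finset.mem_univ j)]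
    rw [mul_comm (x i + y j), mul_assoc, mul_inv_cancel₀ (hx i j), mul_one]
  -- determinant equations
  have e1 : (∏ i, ∏ k, (x i + y k)) * (Matrix.of fun i j => (x i + y j)⁻¹).det =
      (vandermonde x).det * B.det := by
    rw [← Matrix.det_mul, ← hM, hMval]
    exact (Matrix.det_mul_column (fun i => ∏ k, (x i + y k)) _).symm
  have e2 : (vandermonde (fun i => -y i)).det * B.det =
      ∏ i, ∏ k ∈ univ.erase i, (y k - y i) := by
    rw [← Matrix.det_mul, hD, Matrix.det_diagonal]
  have hVy : (vandermonde (fun i => -y i)).det = ∏ i, ∏ j ∈ Finset.Ioi i, (y i - y j) := by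
    rw [det_vandermonde]
    exact Finset.prod_congr rfl fun i _ => Finset.prod_congr rfl fun j _ => by ring
  have hprod : ∏ i, ∏ k ∈ univ.erase i, (y k - y i) =
      (∏ i, ∏ j ∈ Finset.Ioi i, (y i - y j)) * (∏ i, ∏ j ∈ Finset.Ioi i, (y j - y i)) := by
    have h0 := prod_prod_Ioi_mul_eq_prod_prod_off_diag (fun a b => y a - y b)
    calc ∏ i, ∏ k ∈ univ.erase i, (y k - y i)
        = ∏ i, ∏ j ∈ Finset.Ioi i, (y j - y i) * (y i - y j) := by
          refine (h0.trans ?_).symm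
          exact Finset.prod_congr rfl fun i _ =>
            Finset.prod_congr (by ext k; simp [eq_comm]) fun _ _ => rfl
      _ = _ := by
          rw [← Finset.prod_mul_distrib]
          exact Finset.prod_congr rfl fun i _ => by
            rw [← Finset.prod_mul_distrib]
            exact Finset.prod_congr rfl fun j _ => mul_comm _ _
  have hVyne : (∏ i, ∏ j ∈ Finset.Ioi i, (y i - y j)) ≠ 0 := by
    rw [Finset.prod_ne_zero_iff]
    intro i _
    rw [Finset.prod_ne_zero_iff]
    intro j hj
    have : i ≠ j := (Finset.mem_Ioi.mp hj).ne
    exact sub_ne_zero.mpr (fun h => this (hy h))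
  have hBdet : B.det = ∏ i, ∏ j ∈ Finset.Ioi i, (y j - y i) := by
    rw [hVy, hprod] at e2
    exact mul_left_cancel₀ hVyne e2
  have hPne : (∏ i, ∏ k, (x i + y k)) ≠ 0 := by
    rw [Finset.prod_ne_zero_iff]
    intro i _
    rw [Finset.prod_ne_zero_iff]
    exact fun j _ => hx i j
  rw [eq_div_iff hPne, mul_comm _ (∏ i, ∏ j, (x i + y j)), e1, hBdet, det_vandermonde]
  rw [← Finset.prod_mul_distrib]
  exact Finset.prod_congr rfl fun i _ => by rw [← Finset.prod_mul_distrib]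

lemma integral_key (a b : ℝ) (hab : (-1:ℝ) < a + b) :
    ∫ x in Set.Icc (0:ℝ) 1, x ^ a * x ^ b = (a + b + 1)⁻¹ := by
  rw [MeasureTheory.integral_Icc_eq_integral_Ioc]
  have h : ∫ x in Set.Ioc (0:ℝ) 1, x ^ a * x ^ b = ∫ x in Set.Ioc (0:ℝ) 1, x ^ (a + b) := by
    refine setIntegral_congr_fun measurableSet_Ioc fun x hx => ?_
    rw [Real.rpow_add hx.1]
  rw [h, ← intervalIntegral.integral_of_le zero_le_one, integral_rpow (Or.inl hab),
    Real.one_rpow, Real.zero_rpow (by linarith), sub_zero, one_div]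


end CauchyAux

/-- Let `α 1, …, α N` be distinct reals in `(−1/2, ∞)`.  The Gram matrix of the
functions `x^{α i}` in `L²[0,1]` — whose `(i,j)` entry is
`⟨x^{α j}, x^{α i}⟩ = ∫₀¹ x^{α j} · x^{α i} dx` — has determinant
`∏_{j<i} (α i − α j)² / ∏_{i,j} (α i + α j + 1)`. -/
theorem gram_det_powers (N : ℕ) (α : Fin N → ℝ)
    (hα : ∀ i, -(1 / 2 : ℝ) < α i) (hinj : Function.Injective α) :
    (Matrix.of fun i j : Fin N =>
        ∫ x in Set.Icc (0 : ℝ) 1, x ^ α j * x ^ α i).det =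
      (∏ p ∈ Finset.univ.filter (fun p : Fin N × Fin N => p.2 < p.1),
        (α p.1 - α p.2) ^ 2) /
      ∏ i, ∏ j, (α i + α j + 1) := by
  set f : Fin N → ℝ := fun i => α i + 1/2 with hf
  have hx : ∀ i j : Fin N, f i + f j ≠ 0 := by
    intro i j
    have := hα i; have := hα j
    simp only [hf]
    intro h; linarith
  have hyinj : Function.Injective f := fun i j h => hinj (by
    simpa [hf] using h)
  have hmat : (Matrix.of fun i j : Fin N =>
      ∫ x in Set.Icc (0 : ℝ) 1, x ^ α j * x ^ α i)
      = Matrix.of fun i j => (f i + f j)⁻¹ := by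
    ext i j
    have := hα i; have := hα j
    rw [Matrix.of_apply, Matrix.of_apply, integral_key _ _ (by linarith)]
    congr 1
    simp only [hf]; ring
  rw [hmat, cauchy_det f f hx hyinj]
  congr 1
  · have : ∀ i j : Fin N, (f j - f i) * (f j - f i) = (α j - α i)^2 := by
      intro i j; simp only [hf]; ring
    rw [Finset.prod_congr rfl fun i _ => Finset.prod_congr rfl fun j _ => this i j]
    rw [Finset.prod_sigma']
    refine Finset.prod_nbij' (fun s : Σ _ : Fin N, Fin N => (s.2, s.1))
      (fun p : Fin N × Fin N => ⟨p.2, p.1⟩) ?_ ?_ ?_ ?_ ?_ <;> simp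
  · exact Finset.prod_congr rfl fun i _ => Finset.prod_congr rfl fun j _ => by
      simp only [hf]; ring
end

section
/- Let α₀, α₁, …, α_N be distinct real numbers in (−1/2, ∞). Then the L² distance from x^{α₀} to the span of {x^{α₁}, …, x^{α_N}} in L²[0,1] satisfies dist(x^{α₀}, span{x^{α₁},…,x^{α_N}})² = (1/(2α₀+1)) · ∏_{i=1}^{N} (α_i − α₀)² / (α_i + α₀ + 1)². -/
open MeasureTheory Filter Topology Finset Polynomial intervalIntegral

local notation "⟪" x ", " y "⟫" => @inner ℂ _ _ x y

lemma inner_pow_pow {a b : ℝ} (ha : -(1/2:ℝ) < a) (hb : -(1/2:ℝ) < b)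
    (f g : Lp ℂ 2 mu01)
    (hf : (f : ℝ → ℂ) =ᵐ[mu01] fun x => ((x ^ a : ℝ) : ℂ))
    (hg : (g : ℝ → ℂ) =ᵐ[mu01] fun x => ((x ^ b : ℝ) : ℂ)) :
    ⟪f, g⟫ = ((1 / (a + b + 1) : ℝ) : ℂ) := by
  have hab : (-1 : ℝ) < a + b := by linarith
  rw [MeasureTheory.L2.inner_def]
  have hzero : ∀ᵐ x ∂mu01, x ≠ (0:ℝ) := by
    rw [ae_iff]
    have : {x : ℝ | ¬ x ≠ 0} = {0} := by ext x; simp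
    rw [this, mu01, Measure.restrict_apply (measurableSet_singleton 0)]
    exact measure_mono_null Set.inter_subset_left Real.volume_singleton
  have hpos : ∀ᵐ x ∂mu01, (0:ℝ) < x := by
    have hIcc : ∀ᵐ x ∂mu01, x ∈ Set.Icc (0:ℝ) 1 :=
      (ae_restrict_iff' measurableSet_Icc).mpr (Filter.Eventually.of_forall fun x h => h)
    filter_upwards [hzero, hIcc] with x hx hx' using lt_of_le_of_ne hx'.1 (Ne.symm hx)
  have h1 : (fun x => ⟪(f : ℝ → ℂ) x, (g : ℝ → ℂ) x⟫) =ᵐ[mu01]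
      fun x => ((x ^ (a + b) : ℝ) : ℂ) := by
    filter_upwards [hf, hg, hpos] with x hfx hgx hx
    simp only [RCLike.inner_apply, hfx, hgx, Complex.conj_ofReal]
    rw [← Complex.ofReal_mul, ← Real.rpow_add hx]
    rw [add_comm]
  rw [integral_congr_ae h1,
    show (∫ x, ((x ^ (a+b) : ℝ) : ℂ) ∂mu01) = ((∫ x, x ^ (a+b) ∂mu01 : ℝ) : ℂ) from
      integral_ofReal]
  norm_cast
  rw [mu01, integral_Icc_eq_integral_Ioc, ← intervalIntegral.integral_of_le (by norm_num : (0:ℝ) ≤ 1),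
    integral_rpow (Or.inl hab)]
  rw [Real.one_rpow, Real.zero_rpow (by linarith : a + b + 1 ≠ 0)]
  ring


lemma exists_coeffs_s15 (N : ℕ) (α0 : ℝ) (α : Fin N → ℝ)
    (hα0 : -(1/2:ℝ) < α0) (hα : ∀ i, -(1/2:ℝ) < α i)
    (hinj : Function.Injective α) (hne : ∀ i, α i ≠ α0) :
    ∃ c : Fin N → ℝ,
      (∀ i, 1/(α i + α0 + 1) + ∑ j, c j * (1/(α i + α j + 1)) = 0) ∧
      1/(2*α0+1) + ∑ j, c j * (1/(α j + α0 + 1)) =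
        (1/(2*α0+1)) * ∏ i, (α i - α0)^2/(α i + α0 + 1)^2 := by
  classical
  have hA0 : (0:ℝ) < 2*α0+1 := by linarith
  have hA : ∀ i, (0:ℝ) < α0 + α i + 1 := fun i => by have := hα i; linarith
  have hB : ∀ i j, (0:ℝ) < α i + α j + 1 := fun i j => by have := hα i; have := hα j; linarith
  set K : ℝ := ∏ i, (α0 - α i)/(α0 + α i + 1) with hK
  have hd : ∀ j, (α0 - α j) * ∏ i ∈ univ.erase j, (α i - α j) ≠ 0 := by
    intro j
    refine mul_ne_zero (sub_ne_zero.mpr (Ne.symm (hne j))) (prod_ne_zero_iff.mpr ?_)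
    intro i hi
    exact sub_ne_zero.mpr (fun h => (mem_erase.mp hi).1 (hinj h))
  set c : Fin N → ℝ := fun j =>
    K * (∏ i, (-(α j + 1) - α i)) / ((α0 - α j) * ∏ i ∈ univ.erase j, (α i - α j)) with hc
  set P : ℝ[X] := C K * ∏ i, (X - C (α i)) with hP
  set Q : ℝ[X] := (∏ i, (X + C (α i + 1))) +
      ∑ j, C (c j) * ((X + C (α0+1)) * ∏ i ∈ univ.erase j, (X + C (α i + 1))) with hQdef
  have hPeval : ∀ x : ℝ, P.eval x = K * ∏ k, (x - α k) := by
    intro x; simp [hP, eval_prod]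
  have hQeval : ∀ x : ℝ, Q.eval x =
      (∏ k, (x + (α k + 1))) +
      ∑ j, c j * ((x + (α0+1)) * ∏ k ∈ univ.erase j, (x + (α k + 1))) := by
    intro x; simp [hQdef, eval_prod, eval_finset_sum]
  have hPQ : P = Q := by
    have hsub : P - Q = 0 := by
      apply Polynomial.eq_zero_of_natDegree_lt_card_of_eval_eq_zero (P - Q)
        (f := fun o : Option (Fin N) => o.elim (-(α0+1)) (fun j => -(α j + 1)))
      · intro o o' h
        match o, o' with
        | none, none => rfl
        | none, some j =>
          exfalso; simp only [Option.elim] at h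
          exact hne j (by linarith [neg_injective h])
        | some j, none =>
          exfalso; simp only [Option.elim] at h
          exact hne j (by linarith [neg_injective h])
        | some j, some j' =>
          simp only [Option.elim] at h
          have : α j = α j' := by linarith [neg_injective h]
          exact congrArg some (hinj this)
      · intro o
        rw [eval_sub, sub_eq_zero]
        match o with
        | none =>
          rw [hPeval, hQeval]
          simp only [Option.elim_none]
          have hs : ∀ j ∈ univ, c j * ((-(α0+1) + (α0+1)) *
              ∏ k ∈ univ.erase j, (-(α0+1) + (α k + 1))) = 0 := by
            intro j _; rw [neg_add_cancel, zero_mul, mul_zero]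
          rw [Finset.sum_congr rfl hs, Finset.sum_const_zero, add_zero, hK,
            ← prod_mul_distrib]
          refine prod_congr rfl fun k _ => ?_
          have := hA k
          field_simp
          ring
        | some j =>
          rw [hPeval, hQeval]
          simp only [Option.elim_some]
          have h1 : ∏ k, (-(α j + 1) + (α k + 1)) = 0 :=
            prod_eq_zero (mem_univ j) (by ring)
          rw [h1, zero_add]
          rw [Finset.sum_eq_single j]
          · have h2 : ∏ k ∈ univ.erase j, (-(α j + 1) + (α k + 1)) =
                ∏ k ∈ univ.erase j, (α k - α j) := prod_congr rfl fun k _ => by ring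
            have h3 : (-(α j + 1) + (α0+1)) = α0 - α j := by ring
            rw [h2, h3, hc]
            rw [div_mul_cancel₀ _ (hd j)]
          · intro j' _ hj'
            have : ∏ k ∈ univ.erase j', (-(α j + 1) + (α k + 1)) = 0 :=
              prod_eq_zero (mem_erase.mpr ⟨Ne.symm hj', mem_univ j⟩) (by ring)
            rw [this, mul_zero, mul_zero]
          · intro h; exact absurd (mem_univ j) h
      · have hdP : P.natDegree ≤ N := by
          refine (natDegree_mul_le).trans ?_
          rw [natDegree_C, zero_add]
          refine (natDegree_prod_le _ _).trans ?_
          calc ∑ i, (X - C (α i) : ℝ[X]).natDegree ≤ ∑ i : Fin N, 1 :=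
                Finset.sum_le_sum fun i _ => le_of_eq (natDegree_X_sub_C _)
            _ = N := by simp
        have hdQ : Q.natDegree ≤ N := by
          refine (natDegree_add_le _ _).trans (max_le ?_ ?_)
          · refine (natDegree_prod_le _ _).trans ?_
            calc ∑ i, (X + C (α i + 1) : ℝ[X]).natDegree ≤ ∑ i : Fin N, 1 :=
                  Finset.sum_le_sum fun i _ => le_of_eq (natDegree_X_add_C _)
              _ = N := by simp
          · refine (natDegree_sum_le_of_forall_le _ _ ?_)
            intro j _
            have hj : 0 < N := j.pos
            refine (natDegree_mul_le).trans ?_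
            rw [natDegree_C, zero_add]
            refine le_trans (natDegree_mul_le) ?_
            have h4 : (X + C (α0+1) : ℝ[X]).natDegree ≤ 1 :=
              le_of_eq (natDegree_X_add_C _)
            have h5 : (∏ i ∈ univ.erase j, (X + C (α i + 1)) : ℝ[X]).natDegree ≤ N - 1 := by
              refine (natDegree_prod_le _ _).trans ?_
              have : ∀ i ∈ univ.erase j, (X + C (α i + 1) : ℝ[X]).natDegree ≤ 1 :=
                fun i _ => le_of_eq (natDegree_X_add_C _)
              calc ∑ i ∈ univ.erase j, (X + C (α i + 1) : ℝ[X]).natDegree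
                  ≤ ∑ i ∈ univ.erase j, 1 := Finset.sum_le_sum this
                _ = N - 1 := by simp [Finset.card_erase_of_mem]
            omega
        calc (P - Q).natDegree ≤ max P.natDegree Q.natDegree := natDegree_sub_le _ _
          _ < N + 1 := by omega
          _ = Fintype.card (Option (Fin N)) := by simp
    exact sub_eq_zero.mp hsub
  have heval : ∀ x : ℝ, K * ∏ k, (x - α k) =
      (∏ k, (x + (α k + 1))) +
      ∑ j, c j * ((x + (α0+1)) * ∏ k ∈ univ.erase j, (x + (α k + 1))) := by
    intro x
    have := congrArg (eval x) hPQ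
    rwa [hPeval, hQeval] at this
  refine ⟨c, ?_, ?_⟩
  · -- orthogonality equations
    intro i
    have hz : (0:ℝ) = (∏ k, (α i + (α k + 1))) +
        ∑ j, c j * ((α i + (α0+1)) * ∏ k ∈ univ.erase j, (α i + (α k + 1))) := by
      rw [← heval (α i), prod_eq_zero (mem_univ i) (sub_self (α i)), mul_zero]
    have hM : (α i + α0 + 1) * ∏ k, (α i + α k + 1) ≠ 0 :=
      mul_ne_zero (ne_of_gt (by have := hα i; linarith))
        (prod_ne_zero_iff.mpr fun k _ => ne_of_gt (hB i k))
    have key : (1/(α i + α0 + 1) + ∑ j, c j * (1/(α i + α j + 1))) *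
        ((α i + α0 + 1) * ∏ k, (α i + α k + 1)) =
        (∏ k, (α i + (α k + 1))) +
        ∑ j, c j * ((α i + (α0+1)) * ∏ k ∈ univ.erase j, (α i + (α k + 1))) := by
      rw [add_mul, Finset.sum_mul]
      congr 1
      · have h1 : (1/(α i + α0 + 1)) * ((α i + α0 + 1) * ∏ k, (α i + α k + 1)) =
            ∏ k, (α i + α k + 1) := by
          have : α i + α0 + 1 ≠ 0 := ne_of_gt (by have := hα i; linarith)
          field_simp
        rw [h1]; exact prod_congr rfl fun k _ => by ring
      · refine sum_congr rfl fun j _ => ?_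
        have hprod : ∏ k, (α i + α k + 1) =
            (α i + α j + 1) * ∏ k ∈ univ.erase j, (α i + α k + 1) :=
          (mul_prod_erase univ _ (mem_univ j)).symm
        have hBj : α i + α j + 1 ≠ 0 := ne_of_gt (hB i j)
        have herase : ∏ k ∈ univ.erase j, (α i + α k + 1) =
            ∏ k ∈ univ.erase j, (α i + (α k + 1)) := prod_congr rfl fun k _ => by ring
        rw [hprod, herase]
        field_simp
        ring
    have : (1/(α i + α0 + 1) + ∑ j, c j * (1/(α i + α j + 1))) *
        ((α i + α0 + 1) * ∏ k, (α i + α k + 1)) = 0 := by rw [key, ← hz]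
    exact (mul_eq_zero.mp this).resolve_right hM
  · -- value of the distance
    have hz0 : K * ∏ k, (α0 - α k) = (∏ k, (α0 + (α k + 1))) +
        ∑ j, c j * ((α0 + (α0+1)) * ∏ k ∈ univ.erase j, (α0 + (α k + 1))) := heval α0
    have hM' : ((2*α0+1) * ∏ k, (α0 + α k + 1)) ≠ 0 :=
      mul_ne_zero (ne_of_gt hA0) (prod_ne_zero_iff.mpr fun k _ => ne_of_gt (hA k))
    have key1 : (1/(2*α0+1) + ∑ j, c j * (1/(α j + α0 + 1))) *
        ((2*α0+1) * ∏ k, (α0 + α k + 1)) =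
        (∏ k, (α0 + (α k + 1))) +
        ∑ j, c j * ((α0 + (α0+1)) * ∏ k ∈ univ.erase j, (α0 + (α k + 1))) := by
      rw [add_mul, Finset.sum_mul]
      congr 1
      · have h1 : (1/(2*α0+1)) * ((2*α0+1) * ∏ k, (α0 + α k + 1)) =
            ∏ k, (α0 + α k + 1) := by
          field_simp
        rw [h1]; exact prod_congr rfl fun k _ => by ring
      · refine sum_congr rfl fun j _ => ?_
        have hprod : ∏ k, (α0 + α k + 1) =
            (α0 + α j + 1) * ∏ k ∈ univ.erase j, (α0 + α k + 1) :=
          (mul_prod_erase univ _ (mem_univ j)).symm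
        have hBj : α j + α0 + 1 ≠ 0 := ne_of_gt (by have := hα j; linarith)
        have hBj' : α0 + α j + 1 ≠ 0 := ne_of_gt (hA j)
        have herase : ∏ k ∈ univ.erase j, (α0 + α k + 1) =
            ∏ k ∈ univ.erase j, (α0 + (α k + 1)) := prod_congr rfl fun k _ => by ring
        rw [hprod, herase]
        field_simp
        ring
    have key2 : ((1/(2*α0+1)) * ∏ i, (α i - α0)^2/(α i + α0 + 1)^2) *
        ((2*α0+1) * ∏ k, (α0 + α k + 1)) = K * ∏ k, (α0 - α k) := by
      have step1 : ((1/(2*α0+1)) * ∏ i, (α i - α0)^2/(α i + α0 + 1)^2) *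
          ((2*α0+1) * ∏ k, (α0 + α k + 1)) =
          ∏ k, ((α k - α0)^2/(α k + α0 + 1)^2 * (α0 + α k + 1)) := by
        rw [prod_mul_distrib]
        have h20 : (2*α0+1 : ℝ) ≠ 0 := ne_of_gt hA0
        calc ((1/(2*α0+1)) * ∏ i, (α i - α0)^2/(α i + α0 + 1)^2) *
            ((2*α0+1) * ∏ k, (α0 + α k + 1)) =
            ((1/(2*α0+1)) * (2*α0+1)) *
              ((∏ i, (α i - α0)^2/(α i + α0 + 1)^2) * ∏ k, (α0 + α k + 1)) := by ring
          _ = (∏ k, (α k - α0)^2/(α k + α0 + 1)^2) * ∏ k, (α0 + α k + 1) := by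
              rw [one_div_mul_cancel h20, one_mul]
      rw [step1, hK, ← prod_mul_distrib]
      refine prod_congr rfl fun k _ => ?_
      have h1 : α k + α0 + 1 ≠ 0 := ne_of_gt (by have := hα k; linarith)
      have h2 : α0 + α k + 1 ≠ 0 := ne_of_gt (hA k)
      field_simp
      ring
    exact mul_right_cancel₀ hM' (key1.trans (hz0.symm.trans key2.symm))


/-- Let `α₀, α 1, …, α N` be distinct reals in `(−1/2, ∞)`, and let `v0` and
`v i` be the elements of `L²[0,1]` representing `x^{α₀}` and `x^{α i}`.  Then
`dist(x^{α₀}, span{x^{α 1},…,x^{α N}})² = (1/(2α₀+1)) ∏ᵢ (αᵢ−α₀)²/(αᵢ+α₀+1)²`. -/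
theorem dist_power_span_powers (N : ℕ) (α0 : ℝ) (α : Fin N → ℝ)
    (hα0 : -(1 / 2 : ℝ) < α0) (hα : ∀ i, -(1 / 2 : ℝ) < α i)
    (hinj : Function.Injective α) (hne : ∀ i, α i ≠ α0)
    (v0 : Lp ℂ 2 mu01)
    (hv0 : (v0 : ℝ → ℂ) =ᵐ[mu01] fun x => ((x ^ α0 : ℝ) : ℂ))
    (v : Fin N → Lp ℂ 2 mu01)
    (hv : ∀ i, (v i : ℝ → ℂ) =ᵐ[mu01] fun x => ((x ^ α i : ℝ) : ℂ)) :
    Metric.infDist v0 (Submodule.span ℂ (Set.range v) : Set (Lp ℂ 2 mu01)) ^ 2 =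
      (1 / (2 * α0 + 1)) * ∏ i, (α i - α0) ^ 2 / (α i + α0 + 1) ^ 2 := by
  classical
  obtain ⟨c, hortho, hval⟩ := exists_coeffs_s15 N α0 α hα0 hα hinj hne
  set S : Submodule ℂ (Lp ℂ 2 mu01) := Submodule.span ℂ (Set.range v) with hS
  set m : Lp ℂ 2 mu01 := ∑ j, (c j : ℂ) • v j with hm
  set r : Lp ℂ 2 mu01 := v0 + m with hr
  have hmS : m ∈ S := Submodule.sum_mem _ fun j _ =>
    Submodule.smul_mem _ _ (Submodule.subset_span ⟨j, rfl⟩)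
  have hinner00 : ⟪v0, v0⟫ = ((1/(2*α0+1) : ℝ) : ℂ) := by
    rw [inner_pow_pow hα0 hα0 v0 v0 hv0 hv0]
    exact congrArg Complex.ofReal (by ring)
  have hinner_i0 : ∀ i, ⟪v i, v0⟫ = ((1/(α i + α0 + 1) : ℝ) : ℂ) := fun i =>
    inner_pow_pow (hα i) hα0 _ _ (hv i) hv0
  have hinner_ij : ∀ i j, ⟪v i, v j⟫ = ((1/(α i + α j + 1) : ℝ) : ℂ) := fun i j =>
    inner_pow_pow (hα i) (hα j) _ _ (hv i) (hv j)
  -- r is orthogonal to each v i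
  have hvir : ∀ i, ⟪v i, r⟫ = 0 := by
    intro i
    rw [hr, inner_add_right, hm, inner_sum]
    simp_rw [inner_smul_right]
    rw [hinner_i0 i]
    have h1 : ∀ j ∈ univ, (c j : ℂ) * ⟪v i, v j⟫ = ((c j * (1/(α i + α j + 1)) : ℝ) : ℂ) := by
      intro j _; rw [hinner_ij i j]; push_cast; ring
    rw [Finset.sum_congr rfl h1, ← Complex.ofReal_sum, ← Complex.ofReal_add, hortho i,
      Complex.ofReal_zero]
  -- hence orthogonal to everything in S
  have horthS : ∀ w ∈ S, ⟪w, r⟫ = 0 := by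
    intro w hw
    rw [hS] at hw
    obtain ⟨d, rfl⟩ := (Submodule.mem_span_range_iff_exists_fun ℂ).mp hw
    rw [sum_inner]
    refine Finset.sum_eq_zero fun j _ => ?_
    rw [inner_smul_left, hvir j, mul_zero]
  have hrperp : ∀ w ∈ S, ⟪r, w⟫ = 0 := by
    intro w hw
    rw [← inner_conj_symm, horthS w hw, map_zero]
  -- infDist = ‖r‖
  have hSne : (S : Set (Lp ℂ 2 mu01)).Nonempty := ⟨0, S.zero_mem⟩
  have hub : Metric.infDist v0 (S : Set (Lp ℂ 2 mu01)) ≤ ‖r‖ := by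
    have h1 : dist v0 (-m) = ‖r‖ := by
      rw [dist_eq_norm, sub_neg_eq_add, hr]
    exact h1 ▸ Metric.infDist_le_dist_of_mem (S.neg_mem hmS)
  have hlb : ‖r‖ ≤ Metric.infDist v0 (S : Set (Lp ℂ 2 mu01)) := by
    by_contra h
    push_neg at h
    obtain ⟨w, hw, hww⟩ := (Metric.infDist_lt_iff hSne).mp h
    have hy : m + w ∈ S := S.add_mem hmS hw
    have hinner : ⟪r, -(m + w)⟫ = 0 := by
      rw [inner_neg_right, hrperp (m + w) hy, neg_zero]
    have hsplit : v0 - w = r + -(m + w) := by rw [hr]; abel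
    have hpyth := norm_add_sq_eq_norm_sq_add_norm_sq_of_inner_eq_zero r (-(m + w)) hinner
    have : dist v0 w = ‖r + -(m + w)‖ := by rw [dist_eq_norm, hsplit]
    nlinarith [norm_nonneg (r + -(m + w)), norm_nonneg r, norm_nonneg (-(m+w)),
      Metric.infDist_le_dist_of_mem (x := v0) hw]
  have hdist : Metric.infDist v0 (S : Set (Lp ℂ 2 mu01)) = ‖r‖ := le_antisymm hub hlb
  -- compute ‖r‖²
  have hrm : ⟪r, m⟫ = 0 := hrperp m hmS
  have hm0 : ⟪m, v0⟫ = ((∑ j, c j * (1/(α j + α0 + 1)) : ℝ) : ℂ) := by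
    rw [hm, sum_inner, Complex.ofReal_sum]
    refine Finset.sum_congr rfl fun j _ => ?_
    rw [inner_smul_left, hinner_i0 j, Complex.conj_ofReal]
    push_cast; ring
  have hrr : ⟪r, r⟫ = ((1/(2*α0+1) + ∑ j, c j * (1/(α j + α0 + 1)) : ℝ) : ℂ) := by
    have h1 : ⟪r, r⟫ = ⟪r, v0⟫ + ⟪r, m⟫ := by
      nth_rewrite 2 [hr]
      exact inner_add_right _ _ _
    have h2 : ⟪r, v0⟫ = ((1/(2*α0+1) + ∑ j, c j * (1/(α j + α0 + 1)) : ℝ) : ℂ) := by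
      rw [hr, inner_add_left, hinner00, hm0]
      push_cast
      ring
    rw [h1, hrm, add_zero, h2]
  rw [hdist]
  have hnorm : ‖r‖^2 = 1/(2*α0+1) + ∑ j, c j * (1/(α j + α0 + 1)) := by
    rw [← inner_self_eq_norm_sq (𝕜 := ℂ), hrr]
    exact Complex.ofReal_re _
  rw [hnorm, hval]
end

section
/- Let {N_n} be an increasing sequence of natural numbers, let 𝓜_n = span{xⁿ, x^{n+1}, …, x^{n+N_n}} ⊆ L²[0,1], and let 𝓜_∞ = { f ∈ L²[0,1] : dist(f, 𝓜_n) → 0 as n → ∞ }. Then 𝓜_∞ is invariant under both the multiplication operator M_x and the Volterra operator V: M_x 𝓜_∞ ⊆ 𝓜_∞ and V 𝓜_∞ ⊆ 𝓜_∞. -/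
open MeasureTheory Filter Topology

namespace MinfAux

instance : IsProbabilityMeasure mu01 := by
  constructor
  simp [mu01, Real.volume_Icc]

lemma mu01_ae_mem : ∀ᵐ x ∂mu01, x ∈ Set.Icc (0:ℝ) 1 :=
  ae_restrict_mem measurableSet_Icc

lemma Ioc_subset {x : ℝ} (hx : x ∈ Set.Icc (0:ℝ) 1) :
    Set.Ioc (0:ℝ) x ⊆ Set.Icc (0:ℝ) 1 :=
  fun t ht => ⟨ht.1.le, ht.2.trans hx.2⟩

/-- Multiplication by `x` does not increase the `L²[0,1]` norm. -/
lemma normM (h w : Lp ℂ 2 mu01)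
    (hw : (w : ℝ → ℂ) =ᵐ[mu01] fun x => (x : ℂ) * h x) : ‖w‖ ≤ ‖h‖ := by
  rw [Lp.norm_def, Lp.norm_def]
  refine ENNReal.toReal_mono (Lp.eLpNorm_ne_top h) (eLpNorm_mono_ae ?_)
  filter_upwards [hw, mu01_ae_mem] with x hx hmem
  rw [hx]
  calc ‖(x : ℂ) * (h : ℝ → ℂ) x‖ = ‖(x : ℂ)‖ * ‖(h : ℝ → ℂ) x‖ := norm_mul _ _
    _ ≤ 1 * ‖(h : ℝ → ℂ) x‖ := by
        gcongr
        rw [Complex.norm_real, Real.norm_eq_abs, abs_of_nonneg hmem.1]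
        exact hmem.2
    _ = ‖(h : ℝ → ℂ) x‖ := one_mul _

lemma integrable_coe (h : Lp ℂ 2 mu01) : Integrable (h : ℝ → ℂ) mu01 :=
  MemLp.integrable one_le_two (Lp.memLp h)

lemma intervalIntegrable_coe (h : Lp ℂ 2 mu01) {x : ℝ} (hx : x ∈ Set.Icc (0:ℝ) 1) :
    IntervalIntegrable (h : ℝ → ℂ) volume 0 x := by
  rw [intervalIntegrable_iff_integrableOn_Ioc_of_le hx.1]
  have hI : IntegrableOn (h : ℝ → ℂ) (Set.Icc 0 1) volume := integrable_coe h
  exact hI.mono_set (Ioc_subset hx)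

/-- The `L¹`-type bound `‖∫₀ˣ h‖ ≤ ‖h‖₂` valid for every `x ∈ [0,1]`. -/
lemma int_bound (h : Lp ℂ 2 mu01) {x : ℝ} (hx : x ∈ Set.Icc (0:ℝ) 1) :
    ‖∫ t in (0:ℝ)..x, (h : ℝ → ℂ) t‖ ≤ ‖h‖ := by
  have hI : IntegrableOn (h : ℝ → ℂ) (Set.Icc 0 1) volume := integrable_coe h
  have hm := Lp.aestronglyMeasurable h
  calc ‖∫ t in (0:ℝ)..x, (h : ℝ → ℂ) t‖
      ≤ ∫ t in Set.Ioc (0:ℝ) x, ‖(h : ℝ → ℂ) t‖ ∂volume := by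
        rw [intervalIntegral.integral_of_le hx.1]
        exact norm_integral_le_integral_norm _
    _ ≤ ∫ t in Set.Icc (0:ℝ) 1, ‖(h : ℝ → ℂ) t‖ ∂volume :=
        setIntegral_mono_set hI.norm (ae_of_all _ fun t => norm_nonneg _)
          (HasSubset.Subset.eventuallyLE (Ioc_subset hx))
    _ = ∫ t, ‖(h : ℝ → ℂ) t‖ ∂mu01 := rfl
    _ ≤ ‖h‖ := by
        rw [integral_norm_eq_lintegral_enorm hm, ← eLpNorm_one_eq_lintegral_enorm,
          Lp.norm_def]
        exact ENNReal.toReal_mono (Lp.eLpNorm_ne_top h)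
          (eLpNorm_le_eLpNorm_of_exponent_le one_le_two hm)

/-- The Volterra operator does not increase the `L²[0,1]` norm. -/
lemma normV (h w : Lp ℂ 2 mu01)
    (hw : (w : ℝ → ℂ) =ᵐ[mu01] fun x => ∫ t in (0:ℝ)..x, (h : ℝ → ℂ) t) :
    ‖w‖ ≤ ‖h‖ := by
  have hb : ∀ᵐ x ∂mu01, ‖(w : ℝ → ℂ) x‖ ≤ ‖h‖ := by
    filter_upwards [hw, mu01_ae_mem] with x hx hmem
    rw [hx]
    exact int_bound h hmem
  have := Lp.norm_le_of_ae_bound (norm_nonneg h) hb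
  have huniv : measureUnivNNReal mu01 = 1 := by
    simp [measureUnivNNReal]
  rw [huniv] at this
  simpa using this

lemma intervalIntegral_congr {f g : ℝ → ℂ} (h : f =ᵐ[mu01] g) {x : ℝ}
    (hx : x ∈ Set.Icc (0:ℝ) 1) :
    ∫ t in (0:ℝ)..x, f t = ∫ t in (0:ℝ)..x, g t := by
  rw [intervalIntegral.integral_of_le hx.1, intervalIntegral.integral_of_le hx.1]
  exact integral_congr_ae (ae_restrict_of_ae_restrict_of_subset (Ioc_subset hx) h)

lemma mono_integral (mono : ℕ → Lp ℂ 2 mu01)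
    (hmono : ∀ k : ℕ, (mono k : ℝ → ℂ) =ᵐ[mu01] fun x => (x : ℂ) ^ k)
    (k : ℕ) {x : ℝ} (hx : x ∈ Set.Icc (0:ℝ) 1) :
    ∫ t in (0:ℝ)..x, (mono k : ℝ → ℂ) t = (x : ℂ) ^ (k+1) / ((k : ℂ) + 1) := by
  rw [intervalIntegral_congr (hmono k) hx]
  have h1 : ∀ t : ℝ, ((t : ℂ)) ^ k = (((t ^ k : ℝ)) : ℂ) := by
    intro t; push_cast; ring
  simp_rw [h1]
  rw [intervalIntegral.integral_ofReal, integral_pow]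
  push_cast
  rw [zero_pow (Nat.succ_ne_zero k)]
  ring

/-- Shift lemma for multiplication: any `p ∈ 𝓜_n` has a representative of `x·p`
in `𝓜_{n+1}`. -/
lemma shiftM (N : ℕ → ℕ) (hN : StrictMono N) (mono : ℕ → Lp ℂ 2 mu01)
    (hmono : ∀ k : ℕ, (mono k : ℝ → ℂ) =ᵐ[mu01] fun x => (x : ℂ) ^ k) (n : ℕ) :
    ∀ p ∈ Mn N mono n, ∃ q ∈ Mn N mono (n+1),
      (q : ℝ → ℂ) =ᵐ[mu01] fun x => (x : ℂ) * p x := by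
  intro p hp
  have hp' : p ∈ Submodule.span ℂ (mono '' Set.Icc n (n + N n)) := hp
  clear hp
  induction hp' using Submodule.span_induction with
  | mem u hu =>
    obtain ⟨k, hk, rfl⟩ := hu
    refine ⟨mono (k+1), Submodule.subset_span ⟨k+1, ?_, rfl⟩, ?_⟩
    · have hNn : N n < N (n+1) := hN (Nat.lt_succ_self n)
      rw [Set.mem_Icc] at hk ⊢
      omega
    · filter_upwards [hmono k, hmono (k+1)] with x h1 h2
      rw [h2, h1]; ring
  | zero =>
    refine ⟨0, Submodule.zero_mem _, ?_⟩
    filter_upwards [Lp.coeFn_zero ℂ 2 mu01] with x hx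
    rw [hx]; simp [hx]
  | add u v hu hv ihu ihv =>
    obtain ⟨qu, hqu, hru⟩ := ihu
    obtain ⟨qv, hqv, hrv⟩ := ihv
    refine ⟨qu + qv, Submodule.add_mem _ hqu hqv, ?_⟩
    filter_upwards [Lp.coeFn_add qu qv, Lp.coeFn_add u v, hru, hrv] with x h1 h2 h3 h4
    rw [h1, Pi.add_apply, h3, h4, h2, Pi.add_apply]; ring
  | smul a u hu ihu =>
    obtain ⟨qu, hqu, hru⟩ := ihu
    refine ⟨a • qu, Submodule.smul_mem _ a hqu, ?_⟩
    filter_upwards [Lp.coeFn_smul a qu, Lp.coeFn_smul a u, hru] with x h1 h2 h3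
    rw [h1, Pi.smul_apply, smul_eq_mul, h3, h2, Pi.smul_apply, smul_eq_mul]; ring

/-- Shift lemma for the Volterra operator: any `p ∈ 𝓜_n` has a representative of
`x ↦ ∫₀ˣ p` in `𝓜_{n+1}`. -/
lemma shiftV (N : ℕ → ℕ) (hN : StrictMono N) (mono : ℕ → Lp ℂ 2 mu01)
    (hmono : ∀ k : ℕ, (mono k : ℝ → ℂ) =ᵐ[mu01] fun x => (x : ℂ) ^ k) (n : ℕ) :
    ∀ p ∈ Mn N mono n, ∃ q ∈ Mn N mono (n+1),
      (q : ℝ → ℂ) =ᵐ[mu01] fun x => ∫ t in (0:ℝ)..x, (p : ℝ → ℂ) t := by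
  intro p hp
  have hp' : p ∈ Submodule.span ℂ (mono '' Set.Icc n (n + N n)) := hp
  clear hp
  induction hp' using Submodule.span_induction with
  | mem u hu =>
    obtain ⟨k, hk, rfl⟩ := hu
    refine ⟨((k : ℂ) + 1)⁻¹ • mono (k+1), Submodule.smul_mem _ _
      (Submodule.subset_span ⟨k+1, ?_, rfl⟩), ?_⟩
    · have hNn : N n < N (n+1) := hN (Nat.lt_succ_self n)
      rw [Set.mem_Icc] at hk ⊢
      omega
    · filter_upwards [Lp.coeFn_smul ((k : ℂ) + 1)⁻¹ (mono (k+1)), hmono (k+1),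
        mu01_ae_mem] with x h1 h2 hmem
      rw [h1, Pi.smul_apply, smul_eq_mul, h2, mono_integral mono hmono k hmem,
        div_eq_inv_mul]
  | zero =>
    refine ⟨0, Submodule.zero_mem _, ?_⟩
    have h0 : ((0 : Lp ℂ 2 mu01) : ℝ → ℂ) =ᵐ[mu01] (fun _ => (0:ℂ)) :=
      Lp.coeFn_zero ℂ 2 mu01
    filter_upwards [h0, mu01_ae_mem] with x hx hmem
    rw [hx]
    rw [intervalIntegral_congr h0 hmem]
    simp
  | add u v hu hv ihu ihv =>
    obtain ⟨qu, hqu, hru⟩ := ihu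
    obtain ⟨qv, hqv, hrv⟩ := ihv
    refine ⟨qu + qv, Submodule.add_mem _ hqu hqv, ?_⟩
    filter_upwards [Lp.coeFn_add qu qv, hru, hrv, mu01_ae_mem] with x h1 h3 h4 hmem
    rw [h1, Pi.add_apply, h3, h4,
      intervalIntegral_congr (Lp.coeFn_add u v) hmem]
    simp only [Pi.add_apply]
    rw [intervalIntegral.integral_add (intervalIntegrable_coe u hmem)
      (intervalIntegrable_coe v hmem)]
  | smul a u hu ihu =>
    obtain ⟨qu, hqu, hru⟩ := ihu
    refine ⟨a • qu, Submodule.smul_mem _ a hqu, ?_⟩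
    filter_upwards [Lp.coeFn_smul a qu, hru, mu01_ae_mem] with x h1 h3 hmem
    rw [h1, Pi.smul_apply, smul_eq_mul, h3,
      intervalIntegral_congr (Lp.coeFn_smul a u) hmem]
    simp only [Pi.smul_apply, smul_eq_mul]
    rw [intervalIntegral.integral_const_mul]

/-- The abstract reduction: if every `p ∈ 𝓜_n` admits `q ∈ 𝓜_{n+1}` with
`dist g q ≤ dist f p`, then `f ∈ 𝓜_∞` implies `g ∈ 𝓜_∞`. -/
lemma key_reduction (N : ℕ → ℕ) (mono : ℕ → Lp ℂ 2 mu01) (f g : Lp ℂ 2 mu01)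
    (H : ∀ n, ∀ p ∈ Mn N mono n, ∃ q ∈ Mn N mono (n+1), dist g q ≤ dist f p)
    (hf : f ∈ Minf N mono) : g ∈ Minf N mono := by
  have h1 : ∀ n, Metric.infDist g (Mn N mono (n+1) : Set (Lp ℂ 2 mu01)) ≤
      Metric.infDist f (Mn N mono n : Set (Lp ℂ 2 mu01)) := by
    intro n
    by_contra hlt
    push_neg at hlt
    obtain ⟨p, hp, hdp⟩ := (Metric.infDist_lt_iff ⟨0, Submodule.zero_mem _⟩).1 hlt
    obtain ⟨q, hq, hle⟩ := H n p hp
    exact absurd (((Metric.infDist_le_dist_of_mem hq).trans hle).trans_lt hdp)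
      (lt_irrefl _)
  have h2 : Tendsto (fun n => Metric.infDist g (Mn N mono (n+1) : Set (Lp ℂ 2 mu01)))
      atTop (𝓝 0) :=
    squeeze_zero (fun n => Metric.infDist_nonneg) h1 hf
  exact (tendsto_add_atTop_iff_nat 1).1 h2

end MinfAux

/-- `𝓜_∞` is invariant under the multiplication operator `M_x` and under the
Volterra operator `V`: if `f ∈ 𝓜_∞` and `g ∈ L²[0,1]` represents `x ↦ x·f(x)`
(respectively `x ↦ ∫₀ˣ f(t) dt`), then `g ∈ 𝓜_∞`. -/
theorem Minf_invariant (N : ℕ → ℕ) (hN : StrictMono N)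
    (mono : ℕ → Lp ℂ 2 mu01)
    (hmono : ∀ k : ℕ, (mono k : ℝ → ℂ) =ᵐ[mu01] fun x => (x : ℂ) ^ k) :
    (∀ f ∈ Minf N mono, ∀ g : Lp ℂ 2 mu01,
      ((g : ℝ → ℂ) =ᵐ[mu01] fun x => (x : ℂ) * f x) → g ∈ Minf N mono) ∧
    (∀ f ∈ Minf N mono, ∀ g : Lp ℂ 2 mu01,
      ((g : ℝ → ℂ) =ᵐ[mu01] fun x => ∫ t in (0 : ℝ)..x, f t) → g ∈ Minf N mono) := by
  constructor
  · intro f hf g hg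
    refine MinfAux.key_reduction N mono f g (fun n p hp => ?_) hf
    obtain ⟨q, hq, hrel⟩ := MinfAux.shiftM N hN mono hmono n p hp
    refine ⟨q, hq, ?_⟩
    rw [dist_eq_norm, dist_eq_norm]
    apply MinfAux.normM (f - p) (g - q)
    filter_upwards [Lp.coeFn_sub g q, Lp.coeFn_sub f p, hg, hrel] with x h1 h2 h3 h4
    rw [h1, Pi.sub_apply, h3, h4, h2, Pi.sub_apply]; ring
  · intro f hf g hg
    refine MinfAux.key_reduction N mono f g (fun n p hp => ?_) hf
    obtain ⟨q, hq, hrel⟩ := MinfAux.shiftV N hN mono hmono n p hp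
    refine ⟨q, hq, ?_⟩
    rw [dist_eq_norm, dist_eq_norm]
    apply MinfAux.normV (f - p) (g - q)
    filter_upwards [Lp.coeFn_sub g q, hg, hrel, MinfAux.mu01_ae_mem]
      with x h1 h3 h4 hmem
    rw [h1, Pi.sub_apply, h3, h4,
      MinfAux.intervalIntegral_congr (Lp.coeFn_sub f p) hmem]
    simp only [Pi.sub_apply]
    rw [intervalIntegral.integral_sub (MinfAux.intervalIntegrable_coe f hmem)
      (MinfAux.intervalIntegrable_coe p hmem)]
end
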